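/- arXiv:1409.1317 — 4 statements merged into one kernel-verified Lean document; each statement's English description precedes it below -/
import Mathlib

section
/- For nonnegative integers n ≥ 1, r, s, m, the integral over the unit cube [0,1]^n of ∏_{i=1}^n x_i^r (1-x_i)^s · ∏_{1≤i<j≤n} |x_i - x_j|^m with respect to dx_1⋯dx_n equals n! · |SP(n,r,s,m)| / ((r+s+1)n + m·n(n-1)/2)!, where SP(n,r,s,m) is the set of Selberg permutations. -/
open MeasureTheory Finset

/-- The type of letters of `A(n,r,s,m)`: the letters `x i`, `a (i,j) k`, `b i k`, `c i k`. -/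
def SelbergLetter (n r s m : ℕ) : Type :=
  Fin n ⊕ ({p : Fin n × Fin n // p.1 < p.2} × Fin m) ⊕ (Fin n × Fin r) ⊕ (Fin n × Fin s)

/-- A permutation of the letters, encoded by the position `w l` of each letter `l`,
is a Selberg permutation if the `x i` appear in order, each `a (i,j) k` lies between
`x i` and `x j`, each `b i k` lies before `x i` and each `c i k` lies after `x i`. -/
def IsSelbergPerm {n r s m : ℕ}
    (w : SelbergLetter n r s m → Fin ((r + s + 1) * n + m * (n * (n - 1) / 2))) : Prop :=
  Function.Bijective w ∧
  (∀ i j : Fin n, i < j → w (Sum.inl i) < w (Sum.inl j)) ∧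
  (∀ (p : {p : Fin n × Fin n // p.1 < p.2}) (k : Fin m),
    w (Sum.inl p.1.1) < w (Sum.inr (Sum.inl (p, k))) ∧
    w (Sum.inr (Sum.inl (p, k))) < w (Sum.inl p.1.2)) ∧
  (∀ (i : Fin n) (k : Fin r), w (Sum.inr (Sum.inr (Sum.inl (i, k)))) < w (Sum.inl i)) ∧
  (∀ (i : Fin n) (k : Fin s), w (Sum.inl i) < w (Sum.inr (Sum.inr (Sum.inr (i, k)))))

/-- `|SP(n,r,s,m)|`, the number of Selberg permutations. -/
noncomputable def SPnum (n r s m : ℕ) : ℕ :=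
  Nat.card {w : SelbergLetter n r s m → Fin ((r + s + 1) * n + m * (n * (n - 1) / 2)) //
    IsSelbergPerm w}

/-!
The integrand at `x ∈ [0,1]^n` is the volume of the box of points `t` in which each `b i k` lies
in `[0, x i]`, each `c i k` in `[x i, 1]` and each `a (i,j) k` between `x i` and `x j`. By Tonelli
the integral is the volume of the region of `[0,1]^A` where the letters obey the Selberg
conditions with the `x i` in any order. Off the null set of ties, the relative order of the
coordinates cuts this region into order cells of volume `1 / |A|!`, one for each such weak
arrangement, and sorting the `x i` shows that there are `n! · |SP(n,r,s,m)|` of them.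
-/

open Function Set
open scoped ENNReal Nat

theorem volume_eq_lintegral_volume_sumElim {α β : Type*} [Fintype α] [Fintype β]
    {S : Set (α ⊕ β → ℝ)} (hS : MeasurableSet S) :
    volume S = ∫⁻ x : α → ℝ, volume {y : β → ℝ | Sum.elim x y ∈ S} := by
  have he := (volume_measurePreserving_sumPiEquivProdPi fun _ : α ⊕ β => ℝ).symm
  rw [← he.measure_preimage hS.nullMeasurableSet, Measure.volume_eq_prod,
    Measure.prod_apply (hS.preimage he.measurable)]
  rfl

theorem volume_setOf_apply_eq_apply {ι : Type*} [Fintype ι] {l l' : ι} (h : l ≠ l') :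
    volume {t : ι → ℝ | t l = t l'} = 0 := by
  classical
  let L : (ι → ℝ) →ₗ[ℝ] ℝ := (LinearMap.proj l : (ι → ℝ) →ₗ[ℝ] ℝ) - LinearMap.proj l'
  have hL : LinearMap.ker L ≠ ⊤ := by
    intro htop
    have hsingle : (Pi.single l (1 : ℝ) : ι → ℝ) ∈ LinearMap.ker L := htop ▸ Submodule.mem_top
    simp [L, h.symm] at hsingle
  convert Measure.addHaar_submodule volume (LinearMap.ker L) hL using 2
  ext t
  simp [L, sub_eq_zero]

theorem ae_injective {ι : Type*} [Fintype ι] : ∀ᵐ t : ι → ℝ, Injective t := by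
  have hsub : {t : ι → ℝ | ¬Injective t} ⊆ ⋃ (l) (l') (_ : l ≠ l'), {t | t l = t l'} := by
    intro t ht
    simp only [Injective, not_forall] at ht
    obtain ⟨l, l', he, hne⟩ := ht
    exact mem_iUnion₂.2 ⟨l, l', mem_iUnion.2 ⟨hne, he⟩⟩
  exact measure_mono_null hsub (measure_iUnion_null fun _ => measure_iUnion_null fun _ =>
    measure_iUnion_null volume_setOf_apply_eq_apply)

theorem Tuple.sort_comp_symm_of_strictMono {n : ℕ} {α : Type*} [LinearOrder α] {f : Fin n → α}
    (hf : StrictMono f) (σ : Equiv.Perm (Fin n)) : Tuple.sort (f ∘ σ.symm) = σ :=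
  (Tuple.eq_sort_iff.2 ⟨by simpa [comp_assoc] using hf.monotone,
    fun _ _ hij h => absurd (hf.injective (by simpa using h)) hij.ne⟩).symm

section OrderCell

variable {ι : Type*} {N : ℕ}

def orderCell (w : ι → Fin N) : Set (ι → ℝ) :=
  {t | (∀ l, t l ∈ Set.Icc 0 1) ∧ ∀ l l', w l < w l' → t l < t l'}

theorem mem_orderCell_iff {w : ι → Fin N} (hw : Injective w) {t : ι → ℝ} :
    t ∈ orderCell w ↔ (∀ l, t l ∈ Set.Icc 0 1) ∧ ∀ l l', t l ≤ t l' ↔ w l ≤ w l' := by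
  refine and_congr_right fun _ => ⟨fun ht l l' => ?_, fun ht l l' h => ?_⟩
  · refine ⟨fun h => not_lt.1 fun h' => (ht l' l h').not_ge h, fun h => ?_⟩
    rcases h.lt_or_eq with h | h
    · exact (ht l l' h).le
    · rw [hw h]
  · simpa only [← not_le, ht] using h

theorem eq_of_le_iff_le {w w' : ι → Fin N} (hw : Bijective w) (hw' : Bijective w')
    (h : ∀ l l', w l ≤ w l' ↔ w' l ≤ w' l') : w = w' := by
  let e : Fin N ≃o Fin N :=
    { (Equiv.ofBijective w hw).symm.trans (Equiv.ofBijective w' hw') with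
      map_rel_iff' := by simp [← h, Equiv.ofBijective_apply_symm_apply] }
  have he : e = OrderIso.refl _ := Subsingleton.elim _ _
  funext l
  simpa [e] using (DFunLike.congr_fun he (w l)).symm

theorem pairwiseDisjoint_orderCell :
    {w : ι → Fin N | Bijective w}.PairwiseDisjoint orderCell := by
  intro w hw w' hw' hne
  refine disjoint_left.2 fun t ht ht' => hne (eq_of_le_iff_le hw hw' fun l l' => ?_)
  rw [← ((mem_orderCell_iff hw.1).1 ht).2, ((mem_orderCell_iff hw'.1).1 ht').2]

variable [Fintype ι]

theorem exists_bijective_le_iff_le {α : Type*} [LinearOrder α] {t : ι → α} (ht : Injective t)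
    (hN : Fintype.card ι = N) :
    ∃ w : ι → Fin N, Bijective w ∧ ∀ l l', t l ≤ t l' ↔ w l ≤ w l' := by
  classical
  have hcard : (Finset.univ.image t).card = N := by
    rw [Finset.card_image_of_injective _ ht, Finset.card_univ, hN]
  let e := (Finset.univ.image t).orderIsoOfFin hcard
  let w : ι → Fin N := fun l => e.symm ⟨t l, Finset.mem_image_of_mem t (Finset.mem_univ l)⟩
  have hle : ∀ l l', t l ≤ t l' ↔ w l ≤ w l' := fun l l' => by simp [w]
  refine ⟨w, (Fintype.bijective_iff_injective_and_card w).2 ⟨fun l l' h => ht ?_, by simp [hN]⟩,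
    hle⟩
  exact le_antisymm ((hle l l').2 h.le) ((hle l' l).2 h.ge)

theorem measurableSet_orderCell (w : ι → Fin N) : MeasurableSet (orderCell w) :=
  measurableSet_setOfPred.2 (by simp only [Set.mem_Icc]; fun_prop)

theorem volume_orderCell_eq {w w' : ι → Fin N} (hw : Bijective w) (hw' : Bijective w') :
    volume (orderCell w) = volume (orderCell w') := by
  let e : ι ≃ ι := (Equiv.ofBijective w hw).trans (Equiv.ofBijective w' hw').symm
  have hwe (l : ι) : w' (e l) = w l := by simp [e, Equiv.ofBijective_apply_symm_apply]
  have hpre : MeasurableEquiv.piCongrLeft (fun _ => ℝ) e ⁻¹' orderCell w' = orderCell w := by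
    ext t
    have hF (l : ι) : MeasurableEquiv.piCongrLeft (fun _ => ℝ) e t (e l) = t l :=
      MeasurableEquiv.piCongrLeft_apply_apply e (β := fun _ => ℝ) t l
    refine and_congr (e.symm.forall_congr_left.trans ?_) (e.symm.forall_congr_left.trans
      (forall_congr' fun l => e.symm.forall_congr_left.trans ?_)) <;> simp [hF, hwe]
  rw [← hpre, (volume_measurePreserving_piCongrLeft (fun _ => ℝ) e).measure_preimage
    (measurableSet_orderCell w').nullMeasurableSet]

theorem volume_biUnion_orderCell_of_bijective {W : Set (ι → Fin N)}
    (hW : W ⊆ {w | Bijective w}) {w₀ : ι → Fin N} (hw₀ : Bijective w₀) :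
    volume (⋃ w ∈ W, orderCell w) = Nat.card W * volume (orderCell w₀) := by
  classical
  rw [measure_biUnion W.to_countable (pairwiseDisjoint_orderCell.subset hW)
    fun w _ => measurableSet_orderCell w, tsum_fintype,
    sum_congr rfl fun w _ => volume_orderCell_eq (hW w.2) hw₀, sum_const, card_univ,
    nsmul_eq_mul, Nat.card_eq_fintype_card]

theorem biUnion_orderCell_ae_eq_univ_pi (hN : Fintype.card ι = N) :
    (⋃ w ∈ {w : ι → Fin N | Bijective w}, orderCell w : Set (ι → ℝ)) =ᵐ[volume]
      univ.pi fun _ => Set.Icc 0 1 := by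
  refine Filter.eventuallyEq_set.2 (ae_injective.mono fun t ht => ?_)
  simp only [mem_iUnion₂, mem_univ_pi]
  refine ⟨fun ⟨w, _, hwt⟩ => hwt.1, fun hcube => ?_⟩
  obtain ⟨w, hw, hle⟩ := exists_bijective_le_iff_le ht hN
  exact ⟨w, hw, (mem_orderCell_iff hw.1).2 ⟨hcube, hle⟩⟩

theorem volume_orderCell {w : ι → Fin N} (hw : Bijective w) :
    volume (orderCell w) = (N ! : ℝ≥0∞)⁻¹ := by
  classical
  have hN : Fintype.card ι = N := by simpa using Fintype.card_of_bijective hw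
  have hcard : Nat.card {w : ι → Fin N | Bijective w} = N ! := by
    refine (Nat.card_congr Equiv.bijectiveEquiv).trans ?_
    rw [Nat.card_eq_fintype_card, Fintype.card_equiv (Fintype.equivFinOfCardEq hN), hN]
  refine ENNReal.eq_inv_of_mul_eq_one_left ?_
  rw [mul_comm, ← hcard, ← volume_biUnion_orderCell_of_bijective subset_rfl hw,
    measure_congr (biUnion_orderCell_ae_eq_univ_pi hN), volume_pi_pi]
  simp

theorem volume_biUnion_orderCell (hN : Fintype.card ι = N) {W : Set (ι → Fin N)}
    (hW : W ⊆ {w | Bijective w}) :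
    volume (⋃ w ∈ W, orderCell w) = Nat.card W * (N ! : ℝ≥0∞)⁻¹ := by
  let e := Fintype.equivFinOfCardEq hN
  rw [volume_biUnion_orderCell_of_bijective hW e.bijective, volume_orderCell e.bijective]

end OrderCell

namespace Selberg

-- `SelbergLetter` split into the `x i` and the other letters, as reducible types so that the
-- product measure on `Letter n r s m → ℝ` is found.
abbrev Pair (n : ℕ) := {p : Fin n × Fin n // p.1 < p.2}

abbrev Rest (n r s m : ℕ) := (Pair n × Fin m) ⊕ (Fin n × Fin r) ⊕ (Fin n × Fin s)

abbrev Letter (n r s m : ℕ) := Fin n ⊕ Rest n r s m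

abbrev numLetters (n r s m : ℕ) : ℕ := (r + s + 1) * n + m * (n * (n - 1) / 2)

theorem card_pair (n : ℕ) : Fintype.card (Pair n) = n * (n - 1) / 2 := by
  rw [Fintype.card_subtype, Fintype.card_product_filter_lt, Fintype.card_fin,
    Nat.choose_two_right]

theorem card_letter (n r s m : ℕ) : Fintype.card (Letter n r s m) = numLetters n r s m := by
  simp only [Fintype.card_sum, Fintype.card_prod, card_pair, Fintype.card_fin]
  ring

variable {n r s m : ℕ}

/-- The Selberg conditions with the `x i` in any order, each `a (i,j) k` lying between `x i` and
`x j` whichever comes first. The inequalities are non-strict, which makes no difference for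
injective `w`. -/
def IsWeakSelberg {α : Type*} [LinearOrder α] (w : Letter n r s m → α) : Prop :=
  (∀ (p : Pair n) (k : Fin m),
    w (Sum.inr (Sum.inl (p, k))) ∈ Set.uIcc (w (Sum.inl p.1.1)) (w (Sum.inl p.1.2))) ∧
  (∀ (i : Fin n) (k : Fin r), w (Sum.inr (Sum.inr (Sum.inl (i, k)))) ≤ w (Sum.inl i)) ∧
  (∀ (i : Fin n) (k : Fin s), w (Sum.inl i) ≤ w (Sum.inr (Sum.inr (Sum.inr (i, k)))))

theorem isWeakSelberg_congr {α β : Type*} [LinearOrder α] [LinearOrder β]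
    {f : Letter n r s m → α} {g : Letter n r s m → β} (h : ∀ l l', f l ≤ f l' ↔ g l ≤ g l') :
    IsWeakSelberg f ↔ IsWeakSelberg g := by
  simp only [IsWeakSelberg, Set.mem_uIcc, h]

theorem isSelbergPerm_iff {v : Letter n r s m → Fin (numLetters n r s m)} :
    IsSelbergPerm v ↔ Bijective v ∧ StrictMono (fun i => v (Sum.inl i)) ∧ IsWeakSelberg v := by
  constructor
  · rintro ⟨hv, hx, ha, hb, hc⟩
    exact ⟨hv, hx, fun p k => Set.mem_uIcc.2 (.inl ⟨(ha p k).1.le, (ha p k).2.le⟩),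
      fun i k => (hb i k).le, fun i k => (hc i k).le⟩
  · rintro ⟨hv, hx, ha, hb, hc⟩
    have hlt {l l' : Letter n r s m} (h : v l ≤ v l') (hne : l ≠ l') : v l < v l' :=
      h.lt_of_ne (hv.1.ne hne)
    refine ⟨hv, fun i j hij => hx hij, fun p k => ?_, fun i k => hlt (hb i k) (by simp),
      fun i k => hlt (hc i k) (by simp)⟩
    have hpk := Set.uIcc_of_le (hx p.2).le ▸ ha p k
    exact ⟨hlt hpk.1 (by simp), hlt hpk.2 (by simp)⟩

def pairMap (σ : Equiv.Perm (Fin n)) (p : Pair n) : Pair n :=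
  if h : σ p.1.1 < σ p.1.2 then ⟨(σ p.1.1, σ p.1.2), h⟩
  else ⟨(σ p.1.2, σ p.1.1), (not_lt.1 h).lt_of_ne (σ.injective.ne p.2.ne')⟩

theorem pairMap_symm_pairMap (σ : Equiv.Perm (Fin n)) (p : Pair n) :
    pairMap σ.symm (pairMap σ p) = p := by
  obtain ⟨⟨i, j⟩, hij⟩ := p
  by_cases h : σ i < σ j <;> simp [pairMap, h, hij, lt_asymm hij]

def pairPerm (σ : Equiv.Perm (Fin n)) : Equiv.Perm (Pair n) where
  toFun := pairMap σ
  invFun := pairMap σ.symm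
  left_inv := pairMap_symm_pairMap σ
  right_inv := pairMap_symm_pairMap σ.symm

theorem uIcc_pairPerm {α : Type*} [LinearOrder α] (f : Fin n → α) (σ : Equiv.Perm (Fin n))
    (p : Pair n) :
    Set.uIcc (f (pairPerm σ p).1.1) (f (pairPerm σ p).1.2) =
      Set.uIcc (f (σ p.1.1)) (f (σ p.1.2)) := by
  simp only [pairPerm, Equiv.coe_fn_mk, pairMap]
  split_ifs
  · rfl
  · exact Set.uIcc_comm _ _

/-- Renaming the `x i` by `σ`, and the `a`, `b`, `c` attached to them accordingly. -/
def relabel (σ : Equiv.Perm (Fin n)) : Equiv.Perm (Letter n r s m) :=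
  σ.sumCongr (((pairPerm σ).prodCongr (.refl _)).sumCongr
    ((σ.prodCongr (.refl _)).sumCongr (σ.prodCongr (.refl _))))

theorem relabel_symm (σ : Equiv.Perm (Fin n)) :
    (relabel σ).symm = (relabel σ.symm : Equiv.Perm (Letter n r s m)) :=
  rfl

theorem IsWeakSelberg.comp_relabel {α : Type*} [LinearOrder α] {w : Letter n r s m → α}
    (hw : IsWeakSelberg w) (σ : Equiv.Perm (Fin n)) : IsWeakSelberg (w ∘ relabel σ) := by
  obtain ⟨ha, hb, hc⟩ := hw
  refine ⟨fun p k => ?_, fun i k => hb (σ i) k, fun i k => hc (σ i) k⟩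
  simpa [relabel, uIcc_pairPerm (fun i => w (Sum.inl i))] using ha (pairPerm σ p) k

/-- The inverse sorts the `x i` of a weak Selberg arrangement. -/
def weakSelbergEquiv :
    Equiv.Perm (Fin n) × {v : Letter n r s m → Fin (numLetters n r s m) // IsSelbergPerm v} ≃
      {w : Letter n r s m → Fin (numLetters n r s m) // Bijective w ∧ IsWeakSelberg w} where
  toFun σv :=
    have hv := isSelbergPerm_iff.1 σv.2.2
    ⟨σv.2.1 ∘ (relabel σv.1).symm, hv.1.comp (Equiv.bijective _),
      relabel_symm σv.1 ▸ hv.2.2.comp_relabel σv.1.symm⟩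
  invFun w :=
    let σ := Tuple.sort fun i => w.1 (Sum.inl i)
    (σ, ⟨w.1 ∘ relabel σ, isSelbergPerm_iff.2 ⟨w.2.1.comp (Equiv.bijective _),
      (Tuple.monotone_sort _).strictMono_of_injective
        ((w.2.1.1.comp Sum.inl_injective).comp σ.injective),
      w.2.2.comp_relabel σ⟩⟩)
  left_inv σv := by
    obtain ⟨σ, v, hv⟩ := σv
    have hσ : Tuple.sort (fun i => (v ∘ (relabel σ).symm) (Sum.inl i)) = σ :=
      Tuple.sort_comp_symm_of_strictMono (isSelbergPerm_iff.1 hv).2.1 σ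
    ext1
    · exact hσ
    · apply Subtype.ext
      simp only [hσ]
      funext l
      simp
  right_inv w := by
    apply Subtype.ext
    funext l
    simp

theorem card_weakSelberg (n r s m : ℕ) :
    Nat.card {w : Letter n r s m → Fin (numLetters n r s m) | Bijective w ∧ IsWeakSelberg w} =
      n ! * SPnum n r s m := by
  refine (Nat.card_congr weakSelbergEquiv.symm).trans ?_
  rw [Nat.card_prod, Nat.card_perm, Nat.card_eq_fintype_card, Fintype.card_fin]
  rfl

def region : Set (Letter n r s m → ℝ) := {t | (∀ l, t l ∈ Set.Icc 0 1) ∧ IsWeakSelberg t}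

theorem measurableSet_region : MeasurableSet (region : Set (Letter n r s m → ℝ)) := by
  simp only [region, IsWeakSelberg, Set.mem_uIcc, Set.mem_Icc]
  exact measurableSet_setOfPred.2 (by fun_prop)

theorem region_ae_eq :
    (region : Set (Letter n r s m → ℝ)) =ᵐ[volume]
      ⋃ w ∈ {w : Letter n r s m → Fin (numLetters n r s m) | Bijective w ∧ IsWeakSelberg w},
        orderCell w := by
  refine Filter.eventuallyEq_set.2 (ae_injective.mono fun t ht => ?_)
  simp only [mem_iUnion₂]
  constructor
  · rintro ⟨hcube, hweak⟩
    obtain ⟨w, hw, hle⟩ := exists_bijective_le_iff_le ht (card_letter n r s m)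
    exact ⟨w, ⟨hw, (isWeakSelberg_congr hle).1 hweak⟩, (mem_orderCell_iff hw.1).2 ⟨hcube, hle⟩⟩
  · rintro ⟨w, ⟨hw, hweak⟩, hcell⟩
    obtain ⟨hcube, hle⟩ := (mem_orderCell_iff hw.1).1 hcell
    exact ⟨hcube, (isWeakSelberg_congr hle).2 hweak⟩

theorem volume_region :
    volume (region : Set (Letter n r s m → ℝ)) =
      n ! * SPnum n r s m * ((numLetters n r s m)! : ℝ≥0∞)⁻¹ := by
  rw [measure_congr region_ae_eq, volume_biUnion_orderCell (card_letter n r s m) fun _ hw => hw.1,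
    card_weakSelberg, Nat.cast_mul]

def fiberBox (x : Fin n → ℝ) : Rest n r s m → Set ℝ
  | .inl (p, _) => Set.uIcc (x p.1.1) (x p.1.2)
  | .inr (.inl (i, _)) => Set.Icc 0 (x i)
  | .inr (.inr (i, _)) => Set.Icc (x i) 1

theorem sumElim_mem_region {x : Fin n → ℝ} {y : Rest n r s m → ℝ} :
    Sum.elim x y ∈ region ↔
      x ∈ univ.pi (fun _ => Set.Icc 0 1) ∧ y ∈ univ.pi (fiberBox x) := by
  simp only [region, mem_ofPred_eq, Sum.forall, Sum.elim_inl, Sum.elim_inr, IsWeakSelberg,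
    mem_univ_pi, fiberBox, Prod.forall, Set.mem_Icc]
  constructor
  · rintro ⟨⟨hx, -, hyb, hyc⟩, ha, hb, hc⟩
    exact ⟨hx, ha, fun i k => ⟨(hyb i k).1, hb i k⟩, fun i k => ⟨hc i k, (hyc i k).2⟩⟩
  · rintro ⟨hx, ha, hb, hc⟩
    refine ⟨⟨hx, fun p k => ?_, fun i k => ⟨(hb i k).1, (hb i k).2.trans (hx i).2⟩,
      fun i k => ⟨(hx i).1.trans (hc i k).1, (hc i k).2⟩⟩, ha, fun i k => (hb i k).2,
      fun i k => (hc i k).1⟩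
    exact Set.uIcc_subset_Icc (hx _) (hx _) (ha p k)

def integrand (n r s m : ℕ) (x : Fin n → ℝ) : ℝ :=
  (∏ i, x i ^ r * (1 - x i) ^ s) *
    ∏ p ∈ univ.filter (fun p : Fin n × Fin n => p.1 < p.2), |x p.1 - x p.2| ^ m

theorem integrand_nonneg {x : Fin n → ℝ} (hx : ∀ i, x i ∈ Set.Icc 0 1) :
    0 ≤ integrand n r s m x :=
  mul_nonneg (prod_nonneg fun i _ => mul_nonneg (pow_nonneg (hx i).1 r)
    (pow_nonneg (sub_nonneg.2 (hx i).2) s)) (prod_nonneg fun _ _ => pow_nonneg (abs_nonneg _) m)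

theorem volume_pi_fiberBox {x : Fin n → ℝ} (hx : ∀ i, x i ∈ Set.Icc 0 1) :
    volume (univ.pi (fiberBox (r := r) (s := s) (m := m) x)) =
      ENNReal.ofReal (integrand n r s m x) := by
  have h0 (i : Fin n) : 0 ≤ x i := (hx i).1
  have h1 (i : Fin n) : 0 ≤ 1 - x i := sub_nonneg.2 (hx i).2
  have hfactor (i : Fin n) : 0 ≤ x i ^ r * (1 - x i) ^ s :=
    mul_nonneg (pow_nonneg (h0 i) r) (pow_nonneg (h1 i) s)
  rw [volume_pi_pi, Fintype.prod_sum_type, Fintype.prod_sum_type, integrand,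
    ENNReal.ofReal_mul (prod_nonneg fun i _ => hfactor i),
    ENNReal.ofReal_prod_of_nonneg fun i _ => hfactor i,
    ENNReal.ofReal_prod_of_nonneg fun p _ => pow_nonneg (abs_nonneg _) m,
    prod_subtype (p := fun p : Fin n × Fin n => p.1 < p.2) _ (by simp)]
  simp only [fiberBox, Real.volume_interval, Real.volume_Icc, Fintype.prod_prod_type, prod_const,
    card_univ, Fintype.card_fin, sub_zero, ENNReal.ofReal_mul (pow_nonneg (h0 _) r),
    ENNReal.ofReal_pow (h0 _), ENNReal.ofReal_pow (h1 _), ENNReal.ofReal_pow (abs_nonneg _),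
    prod_mul_distrib, abs_sub_comm]
  ring

theorem lintegral_integrand (n r s m : ℕ) :
    ∫⁻ x in univ.pi fun _ : Fin n => Set.Icc (0 : ℝ) 1, ENNReal.ofReal (integrand n r s m x) =
      volume (region : Set (Letter n r s m → ℝ)) := by
  rw [volume_eq_lintegral_volume_sumElim measurableSet_region,
    ← lintegral_indicator (MeasurableSet.univ_pi fun _ => measurableSet_Icc)]
  refine lintegral_congr fun x => ?_
  by_cases hx : x ∈ univ.pi fun _ => Set.Icc 0 1
  · rw [indicator_of_mem hx, ← volume_pi_fiberBox (mem_univ_pi.1 hx)]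
    congr 1
    ext y
    exact (sumElim_mem_region.trans (and_iff_right hx)).symm
  · have hempty : {y : Rest n r s m → ℝ | Sum.elim x y ∈ region} = ∅ :=
      eq_empty_of_forall_notMem fun y hy => hx (sumElim_mem_region.1 hy).1
    rw [indicator_of_notMem hx, hempty, measure_empty]

end Selberg

theorem selberg_integral_eq_selberg_permutations_general (n r s m : ℕ) :
    (∫ x in Set.univ.pi (fun _ : Fin n => Set.Icc (0 : ℝ) 1),
      (∏ i, x i ^ r * (1 - x i) ^ s) *
        ∏ p ∈ Finset.univ.filter (fun p : Fin n × Fin n => p.1 < p.2), |x p.1 - x p.2| ^ m)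
    = (n.factorial * SPnum n r s m : ℝ) /
        ((r + s + 1) * n + m * (n * (n - 1) / 2)).factorial := by
  have hnonneg :
      0 ≤ᵐ[volume.restrict (univ.pi fun _ => Set.Icc 0 1)] Selberg.integrand n r s m :=
    (ae_restrict_iff' (.univ_pi fun _ => measurableSet_Icc)).2
      (ae_of_all _ fun x hx => Selberg.integrand_nonneg (mem_univ_pi.1 hx))
  change ∫ x in _, Selberg.integrand n r s m x = _
  rw [integral_eq_lintegral_of_nonneg_ae hnonneg (by unfold Selberg.integrand; fun_prop),
    Selberg.lintegral_integrand, Selberg.volume_region]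
  simp [ENNReal.toReal_mul, div_eq_mul_inv]

theorem selberg_integral_eq_selberg_permutations (n r s m : ℕ) (hn : 1 ≤ n) :
    (∫ x in Set.univ.pi (fun _ : Fin n => Set.Icc (0 : ℝ) 1),
      (∏ i, x i ^ r * (1 - x i) ^ s) *
        ∏ p ∈ Finset.univ.filter (fun p : Fin n × Fin n => p.1 < p.2), |x p.1 - x p.2| ^ m)
    = (n.factorial * SPnum n r s m : ℝ) /
        ((r + s + 1) * n + m * (n * (n - 1) / 2)).factorial :=
  selberg_integral_eq_selberg_permutations_general n r s m
end

section
/- For positive integers n and m, the exponential generating function identity ∑_{d_1,…,d_{n-1} ≥ 0} |SB(n,m; d_1,…,d_{n-1})| · t_1^{d_1}⋯t_{n-1}^{d_{n-1}} / (d_1!⋯d_{n-1}!) = ∏_{1≤i<j≤n} (t_i + t_{i+1} + ⋯ + t_{j-1})^m holds as an identity of polynomials in t_1,…,t_{n-1}. -/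
open MeasureTheory Finset

/-- The cells of an `(n,m)`-Selberg book: `n` common diagonal cells (`Sum.inl i` is the
`i`-th diagonal cell, `0`-indexed) and, for each page `k` and each pair `i < j`, the
cell in row `i` and column `j` of page `k`. -/
def SBCell (n m : ℕ) : Type := Fin n ⊕ Fin m × {p : Fin n × Fin n // p.1 < p.2}

/-- `f` is an `(n,m)`-Selberg book: a bijective filling with `1, …, n + m·n(n-1)/2` such
that in each page the entry in row `i`, column `j` (`i ≠ j`) is bigger than the entry in
the `i`-th diagonal cell and smaller than the entry in the `j`-th diagonal cell. -/
def IsSelbergBook (n m : ℕ) (f : SBCell n m → ℕ) : Prop :=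
  Set.BijOn f Set.univ (Set.Icc 1 (n + m * (n * (n - 1) / 2))) ∧
  ∀ (k : Fin m) (p : {p : Fin n × Fin n // p.1 < p.2}),
    f (Sum.inl p.1.1) < f (Sum.inr (k, p)) ∧ f (Sum.inr (k, p)) < f (Sum.inl p.1.2)

/-- `f` is an `(n,m)`-Young book: an `(n,m)`-Selberg book whose entries increase along
each row and each column of each page. -/
def IsYoungBook (n m : ℕ) (f : SBCell n m → ℕ) : Prop :=
  IsSelbergBook n m f ∧
  ∀ (k : Fin m) (p q : {p : Fin n × Fin n // p.1 < p.2}),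
    ((p.1.1 = q.1.1 ∧ p.1.2 < q.1.2) ∨ (p.1.2 = q.1.2 ∧ p.1.1 < q.1.1)) →
    f (Sum.inr (k, p)) < f (Sum.inr (k, q))

/-- `|SB(n,m)|`. -/
noncomputable def SBnum (n m : ℕ) : ℕ := Nat.card {f : SBCell n m → ℕ // IsSelbergBook n m f}

/-- `|YB(n,m)|`. -/
noncomputable def YBnum (n m : ℕ) : ℕ := Nat.card {f : SBCell n m → ℕ // IsYoungBook n m f}

/-- The diagonal entries `a_1 < ⋯ < a_n` of the book `f` satisfy
`d i = a_(i+2) - a_(i+1) - 1` (so `d i` is the paper's `d_(i+1)`, for `i = 0, …, n-2`). -/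
def diagGaps (n m : ℕ) (f : SBCell n m → ℕ) (d : Fin (n - 1) → ℕ) : Prop :=
  ∀ i : Fin (n - 1),
    d i = f (Sum.inl ⟨i.val + 1, by have := i.isLt; omega⟩) -
          f (Sum.inl ⟨i.val, by have := i.isLt; omega⟩) - 1

/-- `|SB(n,m; d_1,…,d_(n-1))|`. -/
noncomputable def SBdnum (n m : ℕ) (d : Fin (n - 1) → ℕ) : ℕ :=
  Nat.card {f : SBCell n m → ℕ // IsSelbergBook n m f ∧ diagGaps n m f d}

/-- `|YB(n,m; d_1,…,d_(n-1))|`. -/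
noncomputable def YBdnum (n m : ℕ) (d : Fin (n - 1) → ℕ) : ℕ :=
  Nat.card {f : SBCell n m → ℕ // IsYoungBook n m f ∧ diagGaps n m f d}

abbrev SBPairs (n : ℕ) := {p : Fin n × Fin n // p.1 < p.2}
abbrev SBCells (n m : ℕ) := Fin m × SBPairs n

def Dext (n : ℕ) (d : Fin (n-1) → ℕ) (l : ℕ) : ℕ := if h : l < n-1 then d ⟨l,h⟩ else 0

def Ad (n : ℕ) (d : Fin (n-1) → ℕ) (i : ℕ) : ℕ := 1 + i + ∑ l ∈ range i, Dext n d l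

variable {n m : ℕ} {d : Fin (n-1) → ℕ}

lemma Ad_zero : Ad n d 0 = 1 := by simp [Ad]

lemma Ad_succ (i : ℕ) : Ad n d (i+1) = Ad n d i + Dext n d i + 1 := by
  simp [Ad, Finset.sum_range_succ]; ring

lemma Ad_mono : StrictMono (Ad n d) :=
  strictMono_nat_of_lt_succ fun i => by rw [Ad_succ]; omega

lemma Ad_last (hn : 0 < n) : Ad n d (n-1) = n + ∑ l, d l := by
  have : ∑ l ∈ range (n-1), Dext n d l = ∑ l : Fin (n-1), d l := by
    rw [Finset.sum_range]
    exact Finset.sum_congr rfl fun l _ => by simp [Dext, l.isLt]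
  simp [Ad, this]; omega

lemma Ad_cover (k v : ℕ) (h1 : 1 ≤ v) (h2 : v ≤ Ad n d k) :
    (∃ i ≤ k, v = Ad n d i) ∨ ∃ l < k, Ad n d l < v ∧ v < Ad n d (l+1) := by
  induction k with
  | zero =>
    rw [Ad_zero] at h2
    exact Or.inl ⟨0, le_refl 0, by rw [Ad_zero]; omega⟩
  | succ k ih =>
    rcases le_or_gt v (Ad n d k) with h | h
    · rcases ih h with ⟨i, hi, hv⟩ | ⟨l, hl, hv⟩
      · exact Or.inl ⟨i, by omega, hv⟩
      · exact Or.inr ⟨l, by omega, hv⟩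
    · rcases eq_or_lt_of_le h2 with h' | h'
      · exact Or.inl ⟨k+1, le_refl _, h'⟩
      · exact Or.inr ⟨k, by omega, h, h'⟩

lemma Ad_gap_unique {l l' v : ℕ} (h : Ad n d l < v ∧ v < Ad n d (l+1))
    (h' : Ad n d l' < v ∧ v < Ad n d (l'+1)) : l = l' := by
  by_contra hne
  rcases Nat.lt_or_ge l l' with hlt | hge
  · have := (Ad_mono (n := n) (d := d)).monotone (show l+1 ≤ l' from hlt)
    omega
  · have hlt : l' < l := by omega
    have := (Ad_mono (n := n) (d := d)).monotone (show l'+1 ≤ l from hlt)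
    omega

lemma Ad_gap_not_diag {l v i : ℕ} (h : Ad n d l < v ∧ v < Ad n d (l+1)) :
    v ≠ Ad n d i := by
  intro hv
  rcases Nat.lt_or_ge i (l+1) with hi | hi
  · have := (Ad_mono (n := n) (d := d)).monotone (show i ≤ l by omega); omega
  · have := (Ad_mono (n := n) (d := d)).monotone hi; omega

def pairsEquiv (n : ℕ) : SBPairs n ≃ Σ j : Fin n, Fin j.val where
  toFun p := ⟨p.1.2, ⟨p.1.1.val, p.2⟩⟩
  invFun s := ⟨(⟨s.2.val, lt_trans s.2.isLt s.1.isLt⟩, s.1), s.2.isLt⟩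
  left_inv p := by ext <;> rfl
  right_inv s := by ext <;> rfl

lemma card_pairs (n : ℕ) : Fintype.card (SBPairs n) = n * (n-1) / 2 := by
  rw [Fintype.card_congr (pairsEquiv n), Fintype.card_sigma]
  simp only [Fintype.card_fin]
  rw [← Finset.sum_range (fun j => j)]
  have := Finset.sum_range_id_mul_two n
  omega

lemma card_cells (n m : ℕ) : Fintype.card (SBCells n m) = m * (n * (n-1) / 2) := by
  rw [Fintype.card_prod, card_pairs, Fintype.card_fin]

def cellS (n m : ℕ) (c : SBCells n m) : Finset ℕ := Finset.Ico (c.2.1.1 : ℕ) (c.2.1.2 : ℕ)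

def GFin (n m : ℕ) : Finset (SBCells n m → ℕ) := Fintype.piFinset (cellS n m)

def cnt (n m : ℕ) (g : SBCells n m → ℕ) : Fin (n-1) → ℕ :=
  fun l => (univ.filter fun c => g c = l.val).card


variable {f : SBCell n m → ℕ}

lemma GFin_lt {g : SBCells n m → ℕ} (hg : g ∈ GFin n m) (c : SBCells n m) :
    c.2.1.1.val ≤ g c ∧ g c < c.2.1.2.val ∧ g c < n - 1 := by
  rw [GFin, Fintype.mem_piFinset] at hg
  have := hg c
  rw [cellS, Finset.mem_Ico] at this
  have h2 := c.2.1.2.isLt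
  have h1 := c.2.2
  refine ⟨this.1, this.2, ?_⟩
  have : (c.2.1.1 : ℕ) < c.2.1.2 := h1
  omega

lemma sum_cnt {g : SBCells n m → ℕ} (hg : g ∈ GFin n m) :
    ∑ l, cnt n m g l = m * (n * (n-1) / 2) := by
  have hmap : ∀ c ∈ (univ : Finset (SBCells n m)), g c ∈ range (n-1) :=
    fun c _ => Finset.mem_range.2 (GFin_lt hg c).2.2
  have := Finset.card_eq_sum_card_fiberwise hmap
  rw [Finset.card_univ, card_cells] at this
  rw [this, Finset.sum_range]
  rfl

section book
variable (hm : 0 < m) (hb : IsSelbergBook n m f) (hd : diagGaps n m f d)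
include hm hb

lemma diag_mono : ∀ i j : Fin n, i < j → f (Sum.inl i) < f (Sum.inl j) := by
  intro i j hij
  have h := hb.2 ⟨0, hm⟩ ⟨(i, j), hij⟩
  exact lt_trans h.1 h.2

omit hm in
lemma val_mem (x : SBCell n m) : 1 ≤ f x ∧ f x ≤ n + m * (n * (n - 1) / 2) := by
  have := hb.1.1 (Set.mem_univ x)
  exact this

include hd
lemma diag_eq : ∀ i : Fin n, f (Sum.inl i) = Ad n d i.val := by
  have h0 : ∀ (h0 : 0 < n), f (Sum.inl ⟨0, h0⟩) = 1 := by
    intro h0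
    have h1 : (1 : ℕ) ∈ Set.Icc 1 (n + m * (n * (n - 1) / 2)) := ⟨le_refl 1, by omega⟩
    obtain ⟨x, -, hx⟩ := hb.1.2.2 h1
    cases x with
    | inl i =>
      by_contra hne
      have hi : (0 : ℕ) < i.val := by
        rcases Nat.eq_zero_or_pos i.val with h | h
        · exfalso; apply hne; rw [← hx]; congr 2; exact (Fin.ext h.symm)
        · exact h
      have h2 := diag_mono hm hb ⟨0, h0⟩ i hi
      have h3 := (val_mem hb (Sum.inl ⟨0, h0⟩)).1
      omega
    | inr c =>
      obtain ⟨k, p⟩ := c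
      have h2 := (hb.2 k p).1
      have h3 := (val_mem hb (Sum.inl p.1.1)).1
      omega
  intro i
  obtain ⟨iv, hiv⟩ := i
  induction iv with
  | zero => rw [h0 hiv]; simp [Ad]
  | succ k ih =>
    have hk : k < n := by omega
    have hk1 : k < n - 1 := by omega
    have hgap := hd ⟨k, hk1⟩
    have hmono := diag_mono hm hb ⟨k, hk⟩ ⟨k+1, hiv⟩ (by simp)
    have hAk := ih hk
    have hgap' : d ⟨k, hk1⟩ = f (Sum.inl ⟨k+1, hiv⟩) - f (Sum.inl ⟨k, hk⟩) - 1 := by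
      rw [hgap]
    have hstep : f (Sum.inl ⟨k+1, hiv⟩) = f (Sum.inl ⟨k, hk⟩) + d ⟨k, hk1⟩ + 1 := by omega
    rw [hstep, hAk]
    have hA : Ad n d (k+1) = Ad n d k + Dext n d k + 1 := by
      simp [Ad, Finset.sum_range_succ]; ring
    rw [hA]
    simp [Dext, hk1]

lemma sum_gaps (hn : 0 < n) : ∑ l, d l = m * (n * (n-1) / 2) := by
  set N := n + m * (n * (n - 1) / 2) with hN
  have hn1 : n - 1 < n := by omega
  have hNmem : N ∈ Set.Icc 1 N := ⟨by omega, le_refl N⟩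
  obtain ⟨x, -, hx⟩ := hb.1.2.2 hNmem
  have hlast : f (Sum.inl ⟨n-1, hn1⟩) = N := by
    cases x with
    | inl i =>
      rcases Nat.lt_or_ge i.val (n-1) with h | h
      · have h2 := diag_mono hm hb i ⟨n-1, hn1⟩ h
        have h3 := (val_mem hb (Sum.inl ⟨n-1, hn1⟩)).2
        omega
      · have : i = ⟨n-1, hn1⟩ := Fin.ext (by have := i.isLt; simp; omega)
        rw [← this]; exact hx
    | inr c =>
      obtain ⟨k, p⟩ := c
      have h1 := (hb.2 k p).2
      have h2 := (val_mem hb (Sum.inl p.1.2)).2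
      omega
  have h4 := diag_eq hm hb hd ⟨n-1, hn1⟩
  have h5 : ((⟨n-1, hn1⟩ : Fin n) : ℕ) = n - 1 := rfl
  rw [h5] at h4
  have hAl : Ad n d (n-1) = n + ∑ l, d l := by
    have h6 : ∑ l ∈ range (n-1), Dext n d l = ∑ l : Fin (n-1), d l := by
      rw [Finset.sum_range]
      exact Finset.sum_congr rfl fun l _ => by simp [Dext, l.isLt]
    simp [Ad, h6]; omega
  omega

end book

-- the target type
def Gap (n : ℕ) (d : Fin (n-1) → ℕ) (l : ℕ) : Finset ℕ := Finset.Ioo (Ad n d l) (Ad n d (l+1))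

lemma card_Gap (l : Fin (n-1)) : (Gap n d l.val).card = d l := by
  rw [Gap, Nat.card_Ioo, Ad_succ]
  have : Dext n d l.val = d l := by simp [Dext, l.isLt]
  omega

abbrev Tgt (n m : ℕ) (d : Fin (n-1) → ℕ) : Type :=
  Σ g : {g : SBCells n m → ℕ // g ∈ (GFin n m).filter (fun g => cnt n m g = d)},
    Π l : Fin (n-1), {c : SBCells n m // g.1 c = l.val} ≃ {v // v ∈ Gap n d l.val}

lemma card_Tgt : Fintype.card (Tgt n m d)
    = ((GFin n m).filter (fun g => cnt n m g = d)).card * ∏ l, (d l).factorial := by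
  rw [Fintype.card_sigma]
  have h1 : ∀ g : {g : SBCells n m → ℕ // g ∈ (GFin n m).filter (fun g => cnt n m g = d)},
      Fintype.card (Π l : Fin (n-1), {c : SBCells n m // g.1 c = l.val} ≃ {v // v ∈ Gap n d l.val})
      = ∏ l, (d l).factorial := by
    intro g
    rw [Fintype.card_pi]
    refine Finset.prod_congr rfl fun l _ => ?_
    have hcnt : cnt n m g.1 = d := (Finset.mem_filter.1 g.2).2
    have hfib : Fintype.card {c : SBCells n m // g.1 c = l.val} = d l := by
      rw [Fintype.card_subtype]; exact congrFun hcnt l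
    have hgap : Fintype.card {v // v ∈ Gap n d l.val} = d l := by
      rw [Fintype.card_coe, card_Gap]
    rw [Fintype.card_equiv (Fintype.equivOfCardEq (by rw [hfib, hgap])), hfib]
  rw [Finset.sum_congr rfl fun g _ => h1 g, Finset.sum_const, Finset.card_univ,
    Fintype.card_coe, smul_eq_mul]

lemma book_of (hn : 0 < n)
    (hsum : ∑ l, d l = m * (n * (n-1) / 2))
    {g : SBCells n m → ℕ} (hg : g ∈ GFin n m)
    (F : SBCell n m → ℕ)
    (hF1 : ∀ i : Fin n, F (Sum.inl i) = Ad n d i.val)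
    (hF2 : ∀ c : SBCells n m, Ad n d (g c) < F (Sum.inr c) ∧ F (Sum.inr c) < Ad n d (g c + 1))
    (hinj : ∀ c c' : SBCells n m, g c = g c' → F (Sum.inr c) = F (Sum.inr c') → c = c')
    (hsurj : ∀ l < n-1, ∀ v, Ad n d l < v → v < Ad n d (l+1) → ∃ c, g c = l ∧ F (Sum.inr c) = v) :
    IsSelbergBook n m F ∧ diagGaps n m F d := by
  set N := n + m * (n * (n - 1) / 2) with hN
  have hAlast : Ad n d (n-1) = N := by rw [Ad_last hn, hsum]
  have hmono := (Ad_mono (n := n) (d := d))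
  have horder : ∀ (k : Fin m) (p : SBPairs n),
      F (Sum.inl p.1.1) < F (Sum.inr (k, p)) ∧ F (Sum.inr (k, p)) < F (Sum.inl p.1.2) := by
    intro k p
    have hc := GFin_lt hg (k, p)
    have h2 := hF2 (k, p)
    rw [hF1 p.1.1, hF1 p.1.2]
    constructor
    · exact lt_of_le_of_lt (hmono.monotone hc.1) h2.1
    · exact lt_of_lt_of_le h2.2 (hmono.monotone hc.2.1)
  refine ⟨⟨⟨?_, ?_, ?_⟩, horder⟩, ?_⟩
  · -- MapsTo
    intro x _
    cases x with
    | inl i =>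
      rw [hF1 i]
      have h1 : Ad n d 0 ≤ Ad n d i.val := hmono.monotone (Nat.zero_le _)
      have h2 : Ad n d i.val ≤ Ad n d (n-1) := hmono.monotone (by have := i.isLt; omega)
      rw [Ad_zero] at h1
      exact ⟨by omega, by omega⟩
    | inr c =>
      have h2 := hF2 c
      have hc := GFin_lt hg c
      have h1 : Ad n d 0 ≤ Ad n d (g c) := hmono.monotone (Nat.zero_le _)
      have h3 : Ad n d (g c + 1) ≤ Ad n d (n-1) := hmono.monotone (by omega)
      rw [Ad_zero] at h1
      exact ⟨by omega, by omega⟩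
  · -- InjOn
    intro x _ y _ hxy
    cases x with
    | inl i =>
      cases y with
      | inl j =>
        rw [hF1 i, hF1 j] at hxy
        have : i.val = j.val := hmono.injective hxy
        exact congrArg Sum.inl (Fin.ext this)
      | inr c =>
        exfalso
        rw [hF1 i] at hxy
        exact Ad_gap_not_diag (hF2 c) hxy.symm
    | inr c =>
      cases y with
      | inl j =>
        exfalso
        rw [hF1 j] at hxy
        exact Ad_gap_not_diag (hF2 c) hxy
      | inr c' =>
        have hgc : g c = g c' := Ad_gap_unique (hF2 c) (hxy ▸ hF2 c')
        exact congrArg Sum.inr (hinj c c' hgc hxy)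
  · -- SurjOn
    intro v hv
    obtain ⟨hv1, hv2⟩ := hv
    rcases Ad_cover (n := n) (d := d) (n-1) v hv1 (by omega) with ⟨i, hi, hvi⟩ | ⟨l, hl, h1, h2⟩
    · refine ⟨Sum.inl ⟨i, by omega⟩, Set.mem_univ _, ?_⟩
      rw [hF1]; exact hvi.symm
    · obtain ⟨c, _, hc2⟩ := hsurj l hl v h1 h2
      exact ⟨Sum.inr c, Set.mem_univ _, hc2⟩
  · -- diagGaps
    intro i
    have h1 : F (Sum.inl ⟨i.val + 1, by have := i.isLt; omega⟩) = Ad n d (i.val + 1) := hF1 _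
    have h2 : F (Sum.inl ⟨i.val, by have := i.isLt; omega⟩) = Ad n d i.val := hF1 _
    rw [h1, h2, Ad_succ]
    have : Dext n d i.val = d i := by simp [Dext, i.isLt]
    omega

lemma eapp_eq {g : SBCells n m → ℕ}
    (e : Π l : Fin (n-1), {c : SBCells n m // g c = l.val} ≃ {v // v ∈ Gap n d l.val})
    (c : SBCells n m) (hc : g c < n-1) (l : Fin (n-1)) (h : g c = l.val) :
    ((e ⟨g c, hc⟩ ⟨c, rfl⟩ : {v // v ∈ Gap n d ((⟨g c, hc⟩ : Fin (n-1)) : ℕ)}) : ℕ)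
      = ((e l ⟨c, h⟩ : {v // v ∈ Gap n d l.val}) : ℕ) := by
  obtain ⟨lv, hlv⟩ := l
  dsimp at h
  subst h
  rfl

def PhiF (n m : ℕ) (d : Fin (n-1) → ℕ) (g : SBCells n m → ℕ) (hglt : ∀ c, g c < n-1)
    (e : Π l : Fin (n-1), {c : SBCells n m // g c = l.val} ≃ {v // v ∈ Gap n d l.val}) :
    SBCell n m → ℕ :=
  Sum.elim (fun i => Ad n d i.val) (fun c => ((e ⟨g c, hglt c⟩ ⟨c, rfl⟩ : _) : ℕ))

lemma hglt_of_mem {g : SBCells n m → ℕ}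
    (hg : g ∈ (GFin n m).filter (fun g => cnt n m g = d)) (c : SBCells n m) : g c < n - 1 :=
  (GFin_lt (Finset.mem_of_mem_filter _ hg) c).2.2

noncomputable def Phi (hn : 0 < n) (hsum : ∑ l, d l = m * (n * (n-1) / 2)) :
    Tgt n m d → {f : SBCell n m → ℕ // IsSelbergBook n m f ∧ diagGaps n m f d} :=
  fun x =>
  ⟨PhiF n m d x.1.1 (hglt_of_mem x.1.2) x.2, by
    have hglt := hglt_of_mem x.1.2
    have hmem := Finset.mem_of_mem_filter _ x.1.2
    apply book_of hn hsum hmem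
    · intro i; rfl
    · intro c
      have := (x.2 ⟨x.1.1 c, hglt c⟩ ⟨c, rfl⟩).2
      simp only [Gap, Finset.mem_Ioo] at this
      exact this
    · intro c c' hgc hFv
      set l : Fin (n-1) := ⟨x.1.1 c, hglt c⟩ with hl
      have h1 : PhiF n m d x.1.1 hglt x.2 (Sum.inr c) = ((x.2 l ⟨c, rfl⟩ : _) : ℕ) := rfl
      have h2 : PhiF n m d x.1.1 hglt x.2 (Sum.inr c') = ((x.2 l ⟨c', hgc.symm⟩ : _) : ℕ) :=
        eapp_eq x.2 c' (hglt c') l hgc.symm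
      rw [h1, h2] at hFv
      have := (x.2 l).injective (Subtype.ext hFv)
      exact congrArg Subtype.val this
    · intro l hl v h1 h2
      set l' : Fin (n-1) := ⟨l, hl⟩ with hl'
      have hvmem : v ∈ Gap n d l'.val := by simp only [Gap, Finset.mem_Ioo]; exact ⟨h1, h2⟩
      obtain ⟨cc, hcc⟩ := (x.2 l').surjective ⟨v, hvmem⟩
      refine ⟨cc.1, cc.2, ?_⟩
      have h3 : PhiF n m d x.1.1 hglt x.2 (Sum.inr cc.1)
          = ((x.2 l' ⟨cc.1, cc.2⟩ : _) : ℕ) := eapp_eq x.2 cc.1 (hglt cc.1) l' cc.2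
      rw [h3]
      rw [show (⟨cc.1, cc.2⟩ : {c : SBCells n m // x.1.1 c = l'.val}) = cc from rfl, hcc]⟩

lemma card_books_eq (hn : 0 < n) (hm : 0 < m) (hsum : ∑ l, d l = m * (n * (n-1) / 2)) :
    Nat.card {f : SBCell n m → ℕ // IsSelbergBook n m f ∧ diagGaps n m f d}
    = ((GFin n m).filter (fun g => cnt n m g = d)).card * ∏ l, (d l).factorial := by
  rw [← card_Tgt (n := n) (m := m) (d := d), ← Nat.card_eq_fintype_card]
  symm
  apply Nat.card_eq_of_bijective (Phi hn hsum)
  constructor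
  · -- injective
    rintro ⟨g, e⟩ ⟨g', e'⟩ hxy
    have hF : PhiF n m d g.1 (hglt_of_mem g.2) e = PhiF n m d g'.1 (hglt_of_mem g'.2) e' :=
      congrArg Subtype.val hxy
    have hgg1 : g.1 = g'.1 := by
      funext c
      have h1 : Ad n d (g.1 c) < PhiF n m d g.1 (hglt_of_mem g.2) e (Sum.inr c) ∧
          PhiF n m d g.1 (hglt_of_mem g.2) e (Sum.inr c) < Ad n d (g.1 c + 1) := by
        have := (e ⟨g.1 c, hglt_of_mem g.2 c⟩ ⟨c, rfl⟩).2
        simp only [Gap, Finset.mem_Ioo] at this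
        exact this
      have h2 : Ad n d (g'.1 c) < PhiF n m d g'.1 (hglt_of_mem g'.2) e' (Sum.inr c) ∧
          PhiF n m d g'.1 (hglt_of_mem g'.2) e' (Sum.inr c) < Ad n d (g'.1 c + 1) := by
        have := (e' ⟨g'.1 c, hglt_of_mem g'.2 c⟩ ⟨c, rfl⟩).2
        simp only [Gap, Finset.mem_Ioo] at this
        exact this
      rw [← congrFun hF (Sum.inr c)] at h2
      exact Ad_gap_unique h1 h2
    have hgg : g = g' := Subtype.ext hgg1
    subst hgg
    have hee : e = e' := by
      funext l
      apply Equiv.ext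
      rintro ⟨c, hc⟩
      apply Subtype.ext
      have h1 : ((e l ⟨c, hc⟩ : _) : ℕ) = PhiF n m d g.1 (hglt_of_mem g.2) e (Sum.inr c) :=
        (eapp_eq e c (hglt_of_mem g.2 c) l hc).symm
      have h2 : ((e' l ⟨c, hc⟩ : _) : ℕ) = PhiF n m d g.1 (hglt_of_mem g.2) e' (Sum.inr c) :=
        (eapp_eq e' c (hglt_of_mem g.2 c) l hc).symm
      rw [h1, h2, hF]
    rw [hee]
  · -- surjective
    rintro ⟨F, hbF, hdF⟩
    set N := n + m * (n * (n - 1) / 2) with hN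
    have hdiag := diag_eq hm hbF hdF
    have hmono := (Ad_mono (n := n) (d := d))
    have hAlast : Ad n d (n-1) = N := by rw [Ad_last hn, hsum]
    have hex : ∀ c : SBCells n m, ∃ l, l < n-1 ∧
        Ad n d l < F (Sum.inr c) ∧ F (Sum.inr c) < Ad n d (l+1) := by
      intro c
      have hv := val_mem hbF (Sum.inr c)
      rcases Ad_cover (n := n) (d := d) (n-1) (F (Sum.inr c)) hv.1 (by omega)
        with ⟨i, hi, hvi⟩ | ⟨l, hl, h1, h2⟩
      · exfalso
        have hieq : F (Sum.inr c) = F (Sum.inl ⟨i, by omega⟩) := by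
          rw [hdiag ⟨i, by omega⟩]; exact hvi
        have := hbF.1.2.1 (Set.mem_univ (Sum.inr c : SBCell n m))
          (Set.mem_univ (Sum.inl ⟨i, by omega⟩ : SBCell n m)) hieq
        simp at this
      · exact ⟨l, hl, h1, h2⟩
    classical
    set g : SBCells n m → ℕ := fun c => (hex c).choose with hgdef
    have hgspec : ∀ c, g c < n-1 ∧ Ad n d (g c) < F (Sum.inr c) ∧
        F (Sum.inr c) < Ad n d (g c + 1) := fun c => (hex c).choose_spec
    have hgmem : g ∈ GFin n m := by
      rw [GFin, Fintype.mem_piFinset]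
      intro c
      obtain ⟨k, p⟩ := c
      rw [cellS, Finset.mem_Ico]
      change (p.1.1 : ℕ) ≤ g (k, p) ∧ g (k, p) < (p.1.2 : ℕ)
      have ho := hbF.2 k p
      rw [hdiag p.1.1, hdiag p.1.2] at ho
      have hs := hgspec (k, p)
      constructor
      · by_contra hlt
        push_neg at hlt
        have : Ad n d (g (k, p) + 1) ≤ Ad n d p.1.1.val := hmono.monotone (by omega)
        omega
      · by_contra hge
        push_neg at hge
        have : Ad n d p.1.2.val ≤ Ad n d (g (k, p)) := hmono.monotone hge
        omega
    have hmem' : ∀ (l : Fin (n-1)) (c : {c : SBCells n m // g c = l.val}),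
        F (Sum.inr c.1) ∈ Gap n d l.val := by
      rintro l ⟨c, hc⟩
      simp only [Gap, Finset.mem_Ioo]
      have := hgspec c
      rw [hc] at this
      exact this.2
    set φ : Π l : Fin (n-1), {c : SBCells n m // g c = l.val} → {v // v ∈ Gap n d l.val} :=
      fun l c => ⟨F (Sum.inr c.1), hmem' l c⟩ with hφ
    have hφbij : ∀ l, Function.Bijective (φ l) := by
      intro l
      constructor
      · rintro ⟨c, hc⟩ ⟨c', hc'⟩ hcc
        have hFeq : F (Sum.inr c) = F (Sum.inr c') := congrArg Subtype.val hcc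
        have := hbF.1.2.1 (Set.mem_univ (Sum.inr c : SBCell n m))
          (Set.mem_univ (Sum.inr c' : SBCell n m)) hFeq
        apply Subtype.ext
        exact Sum.inr_injective this
      · rintro ⟨v, hv⟩
        simp only [Gap, Finset.mem_Ioo] at hv
        have hvIcc : v ∈ Set.Icc 1 N := by
          have h1 : Ad n d 0 ≤ Ad n d l.val := hmono.monotone (Nat.zero_le _)
          have h2 : Ad n d (l.val + 1) ≤ Ad n d (n-1) := hmono.monotone (by have := l.isLt; omega)
          rw [Ad_zero] at h1
          exact ⟨by omega, by omega⟩
        obtain ⟨x, -, hx⟩ := hbF.1.2.2 hvIcc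
        cases x with
        | inl i =>
          exfalso
          rw [hdiag i] at hx
          exact Ad_gap_not_diag hv hx.symm
        | inr c =>
          have hgc : g c = l.val := by
            have := hgspec c
            rw [hx] at this
            exact Ad_gap_unique this.2 hv
          exact ⟨⟨c, hgc⟩, Subtype.ext hx⟩
    have hcnt : cnt n m g = d := by
      funext l
      have h1 : cnt n m g l = Fintype.card {c : SBCells n m // g c = l.val} :=
        (Fintype.card_subtype _).symm
      have h2 : Fintype.card {c : SBCells n m // g c = l.val}
          = Fintype.card {v // v ∈ Gap n d l.val} :=
        Fintype.card_congr (Equiv.ofBijective (φ l) (hφbij l))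
      rw [h1, h2, Fintype.card_coe, card_Gap]
    refine ⟨⟨⟨g, Finset.mem_filter.2 ⟨hgmem, hcnt⟩⟩,
      fun l => Equiv.ofBijective (φ l) (hφbij l)⟩, ?_⟩
    apply Subtype.ext
    funext x
    cases x with
    | inl i => exact (hdiag i).symm
    | inr c => rfl

lemma SBdnum_eq (hn : 0 < n) (hm : 0 < m) (d : Fin (n-1) → ℕ) :
    SBdnum n m d = ((GFin n m).filter (fun g => cnt n m g = d)).card * ∏ l, (d l).factorial := by
  by_cases hsum : ∑ l, d l = m * (n * (n-1) / 2)
  · exact card_books_eq hn hm hsum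
  · have h1 : IsEmpty {f : SBCell n m → ℕ // IsSelbergBook n m f ∧ diagGaps n m f d} :=
      ⟨fun x => hsum (sum_gaps hm x.2.1 x.2.2 hn)⟩
    have h2 : (GFin n m).filter (fun g => cnt n m g = d) = ∅ := by
      rw [Finset.filter_eq_empty_iff]
      intro g hg hcnt
      exact hsum (hcnt ▸ sum_cnt hg)
    rw [SBdnum, Nat.card_of_isEmpty, h2]
    simp

lemma SBdnum_zero (hn : 0 < n) (hm : 0 < m) {d : Fin (n-1) → ℕ}
    (hsum : ∑ l, d l ≠ m * (n * (n-1) / 2)) : SBdnum n m d = 0 := by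
  have h1 : IsEmpty {f : SBCell n m → ℕ // IsSelbergBook n m f ∧ diagGaps n m f d} :=
    ⟨fun x => hsum (sum_gaps hm x.2.1 x.2.2 hn)⟩
  rw [SBdnum, Nat.card_of_isEmpty]

lemma prod_fiber_pow (t : ℕ → ℝ) {g : SBCells n m → ℕ} (hg : g ∈ GFin n m) :
    ∏ c : SBCells n m, t (g c + 1) = ∏ l : Fin (n-1), t (l.val + 1) ^ cnt n m g l := by
  have hmap : ∀ c ∈ (univ : Finset (SBCells n m)), g c ∈ range (n-1) :=
    fun c _ => Finset.mem_range.2 (GFin_lt hg c).2.2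
  rw [← Finset.prod_fiberwise_of_maps_to hmap (fun c => t (g c + 1)), Finset.prod_range]
  refine Finset.prod_congr rfl fun l _ => ?_
  rw [show ∏ c ∈ univ.filter (fun c => g c = l.val), t (g c + 1)
      = ∏ c ∈ univ.filter (fun c => g c = l.val), t (l.val + 1) from
    Finset.prod_congr rfl fun c hc => by rw [(Finset.mem_filter.1 hc).2]]
  rw [Finset.prod_const]
  rfl

lemma sum_shift (t : ℕ → ℝ) (a b : ℕ) :
    ∑ l ∈ Finset.Ico a b, t (l + 1) = ∑ l ∈ Finset.Ico (a+1) (b+1), t l := by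
  apply Finset.sum_nbij' (fun l => l + 1) (fun l => l - 1)
  · intro x hx; rw [Finset.mem_Ico] at *; omega
  · intro x hx; rw [Finset.mem_Ico] at *; omega
  · intro x hx; omega
  · intro x hx; rw [Finset.mem_Ico] at hx; omega
  · intro x hx; rfl


theorem selberg_books_generating_function (n m : ℕ) (hn : 0 < n) (hm : 0 < m)
    (t : ℕ → ℝ) :
    ∑' d : Fin (n - 1) → ℕ,
      (SBdnum n m d : ℝ) * ∏ i, t (i.val + 1) ^ d i / ((d i).factorial : ℝ)
    = ∏ p ∈ (Finset.Icc 1 n ×ˢ Finset.Icc 1 n).filter (fun p => p.1 < p.2),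
        (∑ l ∈ Finset.Ico p.1 p.2, t l) ^ m := by

  classical
  set DF : Finset (Fin (n-1) → ℕ) :=
    (Fintype.piFinset fun _ : Fin (n-1) => Finset.range (m * (n * (n-1) / 2) + 1)).filter
      (fun d => ∑ l, d l = m * (n * (n-1) / 2)) with hDF
  rw [tsum_eq_sum (s := DF) ?_]
  · have step2 : ∀ d ∈ DF, (SBdnum n m d : ℝ) * ∏ i, t (i.val + 1) ^ d i / ((d i).factorial : ℝ)
        = ∑ g ∈ (GFin n m).filter (fun g => cnt n m g = d), ∏ c : SBCells n m, t (g c + 1) := by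
      intro d _
      rw [SBdnum_eq hn hm d]
      push_cast
      rw [mul_assoc, ← Finset.prod_mul_distrib]
      have h3 : ∀ l : Fin (n-1), ((d l).factorial : ℝ) *
          (t (l.val + 1) ^ d l / ((d l).factorial : ℝ)) = t (l.val + 1) ^ d l := by
        intro l
        rw [mul_div_cancel₀]
        exact Nat.cast_ne_zero.2 (Nat.factorial_ne_zero _)
      rw [Finset.prod_congr rfl fun l _ => h3 l]
      have hterm : ∀ g ∈ (GFin n m).filter (fun g => cnt n m g = d),
          ∏ c : SBCells n m, t (g c + 1) = ∏ l : Fin (n-1), t (l.val + 1) ^ d l := by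
        intro g hg
        rw [prod_fiber_pow t (Finset.mem_of_mem_filter _ hg)]
        exact Finset.prod_congr rfl fun l _ => by rw [(Finset.mem_filter.1 hg).2]
      rw [Finset.sum_congr rfl hterm, Finset.sum_const, nsmul_eq_mul, mul_comm]
    rw [Finset.sum_congr rfl step2]
    have hmaps : ∀ g ∈ GFin n m, cnt n m g ∈ DF := by
      intro g hg
      rw [hDF, Finset.mem_filter]
      refine ⟨?_, sum_cnt hg⟩
      rw [Fintype.mem_piFinset]
      intro l
      rw [Finset.mem_range]
      have h1 : cnt n m g l ≤ ∑ l', cnt n m g l' :=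
        Finset.single_le_sum (fun _ _ => Nat.zero_le _) (Finset.mem_univ l)
      rw [sum_cnt hg] at h1
      omega
    rw [Finset.sum_fiberwise_of_maps_to hmaps (fun g => ∏ c : SBCells n m, t (g c + 1))]
    rw [show (GFin n m) = Fintype.piFinset (cellS n m) from rfl,
      ← Finset.prod_univ_sum (cellS n m) (fun _ l => t (l + 1))]
    rw [Fintype.prod_prod_type (fun x : SBCells n m => ∑ l ∈ cellS n m x, t (l + 1))]
    have h6 : ∀ k : Fin m, ∏ p : SBPairs n, ∑ l ∈ cellS n m (k, p), t (l + 1)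
        = ∏ p : SBPairs n, ∑ l ∈ Finset.Ico (p.1.1 : ℕ) (p.1.2 : ℕ), t (l + 1) := fun k => rfl
    rw [Finset.prod_congr rfl fun k _ => h6 k, Finset.prod_const, Finset.card_univ,
      Fintype.card_fin, ← Finset.prod_pow]
    refine Finset.prod_bij' (fun (p : SBPairs n) _ => ((p.1.1.val + 1 : ℕ), (p.1.2.val + 1 : ℕ)))
      (fun q hq => ⟨(⟨q.1 - 1, by
          have h := Finset.mem_filter.1 hq
          have h1 := (Finset.mem_product.1 h.1).1
          rw [Finset.mem_Icc] at h1; omega⟩, ⟨q.2 - 1, by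
          have h := Finset.mem_filter.1 hq
          have h2 := (Finset.mem_product.1 h.1).2
          rw [Finset.mem_Icc] at h2; omega⟩), by
          have h := Finset.mem_filter.1 hq
          have h1 := (Finset.mem_product.1 h.1).1
          rw [Finset.mem_Icc] at h1
          exact Fin.mk_lt_mk.mpr (by have := h.2; omega)⟩)
      ?_ ?_ ?_ ?_ ?_
    · intro p _
      rw [Finset.mem_filter, Finset.mem_product, Finset.mem_Icc, Finset.mem_Icc]
      have h1 := p.1.1.isLt
      have h2 := p.1.2.isLt
      have h3 : p.1.1.val < p.1.2.val := p.2
      exact ⟨⟨by omega, by omega⟩, by omega⟩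
    · intro q hq; exact Finset.mem_univ _
    · intro p _
      apply Subtype.ext
      apply Prod.ext <;> apply Fin.ext <;> simp
    · intro q hq
      have h := Finset.mem_filter.1 hq
      have h1 := (Finset.mem_product.1 h.1).1
      rw [Finset.mem_Icc] at h1
      have h2 := (Finset.mem_product.1 h.1).2
      rw [Finset.mem_Icc] at h2
      have h3 := h.2
      apply Prod.ext <;> simp <;> omega
    · intro p _
      rw [sum_shift]
  · intro d hd
    have hsum : ∑ l, d l ≠ m * (n * (n-1) / 2) := by
      intro hsum
      apply hd
      rw [hDF, Finset.mem_filter]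
      refine ⟨?_, hsum⟩
      rw [Fintype.mem_piFinset]
      intro l
      rw [Finset.mem_range]
      have h1 : d l ≤ ∑ l', d l' :=
        Finset.single_le_sum (fun _ _ => Nat.zero_le _) (Finset.mem_univ l)
      omega
    rw [SBdnum_zero hn hm hsum]
    simp
end

section
/- Let r = (r_1,…,r_m) be a composition of r and s = (s_1,…,s_m) a composition of s, both of length m, and let n be a positive integer. Then |SB(n,r,s)| = |SB⁻(n,r,s)| · N! / (N⁻)!, where N = (r+s+1)n + m·n(n-1)/2 + ∑_{i=1}^m r_i s_i and N⁻ = (r+s+1)n + m·n(n-1)/2. -/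
open MeasureTheory Finset

/-- `p = (a,b)` (1-indexed row/column) is a cell of the `(n,r,s)`-staircase: the
`(r+n) × (n+s)` rectangle with the cells below the diagonal cells removed. -/
def stairCell (n r s : ℕ) (p : ℕ × ℕ) : Prop :=
  1 ≤ p.1 ∧ p.1 ≤ r + n ∧ 1 ≤ p.2 ∧ p.2 ≤ n + s ∧ p.1 ≤ r + p.2

/-- `p` is a diagonal cell of the `(n,r,s)`-staircase: the cell in row `r + i`, column `i`
for `1 ≤ i ≤ n`. -/
def isDiagCell (n r : ℕ) (p : ℕ × ℕ) : Prop := p.2 ≤ n ∧ p.1 = r + p.2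

/-- The cells of an `(n,𝐫,𝐬)`-Selberg book: `n` common diagonal cells (`Sum.inl j` is the
`(j+1)`-st diagonal cell) and, for each page `i`, the non-diagonal cells of the
`(n, rr i, ss i)`-staircase. -/
def NRSCell (n m : ℕ) (rr ss : Fin m → ℕ) : Type :=
  Fin n ⊕ (i : Fin m) ×
    {p : ℕ × ℕ // stairCell n (rr i) (ss i) p ∧ ¬ isDiagCell n (rr i) p}

/-- The number of cells `N = (r+s+1)n + m·n(n-1)/2 + ∑ rr i * ss i`. -/
def nrsN (n m : ℕ) (rr ss : Fin m → ℕ) : ℕ :=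
  ((∑ i, rr i) + (∑ i, ss i) + 1) * n + m * (n * (n - 1) / 2) + ∑ i, rr i * ss i

/-- `f` is an `(n,𝐫,𝐬)`-Selberg book: a bijective filling with `1, …, N` such that in each
page the entry of a non-diagonal cell is bigger than the entry of the diagonal cell in the
same row (if any) and smaller than the entry of the diagonal cell in the same column (if any). -/
def IsSBnrs (n m : ℕ) (rr ss : Fin m → ℕ) (f : NRSCell n m rr ss → ℕ) : Prop :=
  Set.BijOn f Set.univ (Set.Icc 1 (nrsN n m rr ss)) ∧
  ∀ (i : Fin m)
    (c : {p : ℕ × ℕ // stairCell n (rr i) (ss i) p ∧ ¬ isDiagCell n (rr i) p}),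
    (∀ j : Fin n, c.1.1 = rr i + j.val + 1 → f (Sum.inl j) < f (Sum.inr ⟨i, c⟩)) ∧
    (∀ j : Fin n, c.1.2 = j.val + 1 → f (Sum.inr ⟨i, c⟩) < f (Sum.inl j))

/-- `f` is an `(n,𝐫,𝐬)`-Young book: an `(n,𝐫,𝐬)`-Selberg book whose entries increase
along each row and each column of each page. -/
def IsYBnrs (n m : ℕ) (rr ss : Fin m → ℕ) (f : NRSCell n m rr ss → ℕ) : Prop :=
  IsSBnrs n m rr ss f ∧
  ∀ (i : Fin m)
    (c c' : {p : ℕ × ℕ // stairCell n (rr i) (ss i) p ∧ ¬ isDiagCell n (rr i) p}),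
    ((c.1.1 = c'.1.1 ∧ c.1.2 < c'.1.2) ∨ (c.1.2 = c'.1.2 ∧ c.1.1 < c'.1.1)) →
    f (Sum.inr ⟨i, c⟩) < f (Sum.inr ⟨i, c'⟩)

/-- `|SB(n,𝐫,𝐬)|`. -/
noncomputable def SBnrsNum (n m : ℕ) (rr ss : Fin m → ℕ) : ℕ :=
  Nat.card {f : NRSCell n m rr ss → ℕ // IsSBnrs n m rr ss f}

/-- `|YB(n,𝐫,𝐬)|`. -/
noncomputable def YBnrsNum (n m : ℕ) (rr ss : Fin m → ℕ) : ℕ :=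
  Nat.card {f : NRSCell n m rr ss → ℕ // IsYBnrs n m rr ss f}

/-- The cells of an `(n,𝐫,𝐬)⁻`-Selberg book: as for `(n,𝐫,𝐬)`-Selberg books, but with
the `rr i × ss i` rectangle at the northeast corner of page `i` removed. -/
def NRSCellM (n m : ℕ) (rr ss : Fin m → ℕ) : Type :=
  Fin n ⊕ (i : Fin m) ×
    {p : ℕ × ℕ // stairCell n (rr i) (ss i) p ∧ ¬ isDiagCell n (rr i) p ∧
      ¬ (p.1 ≤ rr i ∧ n < p.2)}

/-- The number of cells `N⁻ = (r+s+1)n + m·n(n-1)/2`. -/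
def nrsNM (n m : ℕ) (rr ss : Fin m → ℕ) : ℕ :=
  ((∑ i, rr i) + (∑ i, ss i) + 1) * n + m * (n * (n - 1) / 2)

/-- `f` is an `(n,𝐫,𝐬)⁻`-Selberg book. -/
def IsSBnrsM (n m : ℕ) (rr ss : Fin m → ℕ) (f : NRSCellM n m rr ss → ℕ) : Prop :=
  Set.BijOn f Set.univ (Set.Icc 1 (nrsNM n m rr ss)) ∧
  ∀ (i : Fin m)
    (c : {p : ℕ × ℕ // stairCell n (rr i) (ss i) p ∧ ¬ isDiagCell n (rr i) p ∧
      ¬ (p.1 ≤ rr i ∧ n < p.2)}),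
    (∀ j : Fin n, c.1.1 = rr i + j.val + 1 → f (Sum.inl j) < f (Sum.inr ⟨i, c⟩)) ∧
    (∀ j : Fin n, c.1.2 = j.val + 1 → f (Sum.inr ⟨i, c⟩) < f (Sum.inl j))

/-- `|SB⁻(n,𝐫,𝐬)|`. -/
noncomputable def SBnrsMnum (n m : ℕ) (rr ss : Fin m → ℕ) : ℕ :=
  Nat.card {f : NRSCellM n m rr ss → ℕ // IsSBnrsM n m rr ss f}

/-
The only constraints in a Selberg book compare a non-diagonal cell with the diagonal cell in its
row or in its column. The cells of the northeast `rᵢ × sᵢ` corner of page `i` lie in rows `≤ rᵢ`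
and columns `> n`, while the diagonal cells occupy rows `rᵢ + 1, …, rᵢ + n` and columns
`1, …, n`; so the `K = ∑ rᵢ sᵢ` corner cells are unconstrained. A Selberg book is therefore an
arbitrary injective placement of the corner cells into `[1, N]` (there are `N! / (N - K)!` of
them) together with a filling of the other `N⁻ = N - K` cells by the remaining values which,
relabelled order-preservingly by `[1, N⁻]`, is an arbitrary `(n, r, s)⁻`-Selberg book.
-/

def NaturalLabeling {α : Type*} (R : α → α → Prop) (X : Type*) [LT X] : Type _ :=
  {g : α ≃ X // ∀ a b, R a b → g a < g b}

namespace NaturalLabeling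

variable {α β : Type*} {R : α → α → Prop} {X Y : Type*}

instance [LT X] [Finite α] [Finite X] : Finite (NaturalLabeling R X) :=
  Subtype.finite

def congrOrderIso [Preorder X] [Preorder Y] (o : X ≃o Y) :
    NaturalLabeling R X ≃ NaturalLabeling R Y :=
  Equiv.subtypeEquiv (Equiv.equivCongr (Equiv.refl α) o.toEquiv) fun _ => by simp

theorem card_congr_of_card_eq [LinearOrder X] [Finite X] [LinearOrder Y] [Finite Y]
    (h : Nat.card X = Nat.card Y) :
    Nat.card (NaturalLabeling R X) = Nat.card (NaturalLabeling R Y) := by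
  have := Fintype.ofFinite X
  have := Fintype.ofFinite Y
  simp only [Nat.card_eq_fintype_card] at h
  exact Nat.card_congr <| congrOrderIso <|
    (Fintype.orderIsoFinOfCardEq X h).symm.trans (Fintype.orderIsoFinOfCardEq Y rfl)

def congrLeft [LT X] {S : β → β → Prop} (e : α ≃ β) (hRS : ∀ a b, R a b ↔ S (e a) (e b)) :
    NaturalLabeling R X ≃ NaturalLabeling S X :=
  Equiv.subtypeEquiv (Equiv.equivCongr e (Equiv.refl X)) fun g => by
    simp only [hRS]
    exact ⟨fun h a b hab => by simpa using h (e.symm a) (e.symm b) (by simpa using hab),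
      fun h a b hab => by simpa using h (e a) (e b) hab⟩

noncomputable def equivBijOn {δ : Type*} [LT δ] (R : α → α → Prop) (t : Set δ) :
    {f : α → δ // Set.BijOn f Set.univ t ∧ ∀ a b, R a b → f a < f b} ≃ NaturalLabeling R t where
  toFun f := ⟨(Equiv.Set.univ α).symm.trans (f.2.1.equiv f.1), fun a b h => f.2.2 a b h⟩
  invFun g := ⟨fun a => g.1 a,
    ⟨fun a _ => (g.1 a).2, fun a _ b _ h => g.1.injective (Subtype.ext h),
      fun x hx => ⟨g.1.symm ⟨x, hx⟩, trivial, by simp⟩⟩, fun a b h => g.2 a b h⟩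
  left_inv _ := rfl
  right_inv _ := Subtype.ext (Equiv.ext fun _ => rfl)

end NaturalLabeling

namespace Equiv

variable {β γ X : Type*}

open scoped Classical in
noncomputable def sumOfComplRange (ι : γ ↪ X) (g : β ≃ ↥(Set.range ι)ᶜ) : β ⊕ γ ≃ X :=
  (Equiv.sumComm _ _).trans <|
    (Equiv.sumCongr (Equiv.ofInjective ι ι.injective) g).trans (Equiv.Set.sumCompl _)

@[simp]
theorem sumOfComplRange_inl (ι : γ ↪ X) (g : β ≃ ↥(Set.range ι)ᶜ) (b : β) :
    sumOfComplRange ι g (Sum.inl b) = g b := by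
  simp [sumOfComplRange]

@[simp]
theorem sumOfComplRange_inr (ι : γ ↪ X) (g : β ≃ ↥(Set.range ι)ᶜ) (c : γ) :
    sumOfComplRange ι g (Sum.inr c) = ι c := by
  simp [sumOfComplRange]

theorem exists_eq_sumOfComplRange (ι : γ ↪ X) (e : β ⊕ γ ≃ X)
    (he : ∀ c, e (Sum.inr c) = ι c) : ∃ g : β ≃ ↥(Set.range ι)ᶜ, sumOfComplRange ι g = e := by
  have hcompl : ∀ b, e (Sum.inl b) ∈ (Set.range ι)ᶜ := by
    rintro b ⟨c, hc⟩
    rw [← he] at hc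
    exact Sum.inr_ne_inl (e.injective hc)
  refine ⟨Equiv.ofBijective (fun b => ⟨e (Sum.inl b), hcompl b⟩) ⟨fun b b' h => ?_, ?_⟩, ?_⟩
  · exact Sum.inl_injective (e.injective (congrArg Subtype.val h))
  · rintro ⟨x, hx⟩
    cases h : e.symm x with
    | inl b => exact ⟨b, Subtype.ext (by simp [← h])⟩
    | inr c => exact absurd ⟨c, by rw [← he, ← h, apply_symm_apply]⟩ hx
  · ext (b | c)
    · exact sumOfComplRange_inl ι _ b
    · simp [he]

end Equiv

section Counting

variable {β γ X : Type*}

theorem card_naturalLabeling_sum_fiber [LinearOrder X] (R : β → β → Prop) (ι : γ ↪ X) :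
    Nat.card {e : NaturalLabeling (Sum.LiftRel R fun _ _ : γ => False) X //
      Function.Embedding.inr.trans e.1.toEmbedding = ι} =
      Nat.card (NaturalLabeling R ↥(Set.range ι)ᶜ) := by
  symm
  refine Nat.card_congr (Equiv.ofBijective
    (fun g => ⟨⟨Equiv.sumOfComplRange ι g.1, ?_⟩, ?_⟩) ⟨fun g g' h => ?_, ?_⟩)
  · rintro _ _ (⟨h⟩ | ⟨h⟩)
    · simpa using g.2 _ _ h
    · exact h.elim
  · ext c
    simp
  · apply Subtype.ext
    ext b
    simpa using congrArg (fun e => e.1.1 (Sum.inl b)) h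
  · rintro ⟨⟨e, he⟩, hι⟩
    obtain ⟨g, rfl⟩ := Equiv.exists_eq_sumOfComplRange ι e fun c => by simp [← hι]
    exact ⟨⟨g, fun a b h => by simpa using he _ _ (.inl h)⟩, rfl⟩

theorem card_naturalLabeling_sum {Y : Type*} [LinearOrder X] [Finite X] [LinearOrder Y]
    [Finite Y] [Finite β] [Finite γ] (R : β → β → Prop)
    (hcard : Nat.card Y + Nat.card γ = Nat.card X) :
    Nat.card (NaturalLabeling (Sum.LiftRel R fun _ _ : γ => False) X) =
      Nat.card (NaturalLabeling R Y) * (Nat.card X).descFactorial (Nat.card γ) := by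
  classical
  have := Fintype.ofFinite X
  have := Fintype.ofFinite γ
  have hfiber : ∀ ι : γ ↪ X,
      Nat.card {e : NaturalLabeling (Sum.LiftRel R fun _ _ : γ => False) X //
        Function.Embedding.inr.trans e.1.toEmbedding = ι} = Nat.card (NaturalLabeling R Y) := by
    intro ι
    rw [card_naturalLabeling_sum_fiber]
    apply NaturalLabeling.card_congr_of_card_eq
    rw [Nat.card_eq_fintype_card, Fintype.card_compl_set, Set.card_range_of_injective ι.injective]
    simp only [Nat.card_eq_fintype_card] at hcard
    omega
  rw [← Nat.card_congr (Equiv.sigmaFiberEquiv fun e : NaturalLabeling _ X =>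
      Function.Embedding.inr.trans e.1.toEmbedding), Nat.card_sigma,
    sum_congr rfl fun ι _ => hfiber ι, sum_const, card_univ, Fintype.card_embedding_eq,
    smul_eq_mul, mul_comm, Nat.card_eq_fintype_card (α := X), Nat.card_eq_fintype_card (α := γ)]

end Counting

def bookRel {n m : ℕ} (rr : Fin m → ℕ) {P : Fin m → ℕ × ℕ → Prop} :
    Fin n ⊕ (i : Fin m) × {p : ℕ × ℕ // P i p} → Fin n ⊕ (i : Fin m) × {p : ℕ × ℕ // P i p} →
      Prop
  | .inl j, .inr ⟨i, c⟩ => c.1.1 = rr i + j + 1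
  | .inr ⟨_, c⟩, .inl j => c.1.2 = j + 1
  | _, _ => False

theorem forall_bookRel_iff {n m : ℕ} (rr : Fin m → ℕ) {P : Fin m → ℕ × ℕ → Prop}
    (f : Fin n ⊕ (i : Fin m) × {p : ℕ × ℕ // P i p} → ℕ) :
    (∀ a b, bookRel rr a b → f a < f b) ↔ ∀ i c,
      (∀ j : Fin n, c.1.1 = rr i + j.val + 1 → f (.inl j) < f (.inr ⟨i, c⟩)) ∧
      (∀ j : Fin n, c.1.2 = j.val + 1 → f (.inr ⟨i, c⟩) < f (.inl j)) := by
  refine ⟨fun h i c => ⟨fun j => h (.inl j) (.inr ⟨i, c⟩), fun j => h (.inr ⟨i, c⟩) (.inl j)⟩, ?_⟩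
  rintro h (j | ⟨i, c⟩) (j' | ⟨i', c'⟩) hR
  · exact hR.elim
  · exact (h i' c').1 j hR
  · exact (h i c).2 j' hR
  · exact hR.elim

theorem isSBnrs_iff {n m : ℕ} {rr ss : Fin m → ℕ} (f : NRSCell n m rr ss → ℕ) :
    IsSBnrs n m rr ss f ↔
      Set.BijOn f Set.univ (Set.Icc 1 (nrsN n m rr ss)) ∧ ∀ a b, bookRel rr a b → f a < f b :=
  and_congr_right fun _ => (forall_bookRel_iff rr f).symm

theorem isSBnrsM_iff {n m : ℕ} {rr ss : Fin m → ℕ} (f : NRSCellM n m rr ss → ℕ) :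
    IsSBnrsM n m rr ss f ↔
      Set.BijOn f Set.univ (Set.Icc 1 (nrsNM n m rr ss)) ∧ ∀ a b, bookRel rr a b → f a < f b :=
  and_congr_right fun _ => (forall_bookRel_iff rr f).symm

theorem finite_setOf_stairCell (n r s : ℕ) : {p | stairCell n r s p}.Finite :=
  (Set.finite_Icc (0, 0) (r + n, n + s)).subset fun _ hp =>
    ⟨⟨Nat.zero_le _, Nat.zero_le _⟩, hp.2.1, hp.2.2.2.1⟩

instance (n r s : ℕ) (Q : ℕ × ℕ → Prop) : Finite {p : ℕ × ℕ // stairCell n r s p ∧ Q p} :=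
  ((finite_setOf_stairCell n r s).subset fun _ hp => hp.1).to_subtype

def CornerCell (n m : ℕ) (rr ss : Fin m → ℕ) : Type :=
  (i : Fin m) ×
    {p : ℕ × ℕ // stairCell n (rr i) (ss i) p ∧ ¬ isDiagCell n (rr i) p ∧ (p.1 ≤ rr i ∧ n < p.2)}

instance (n m : ℕ) (rr ss : Fin m → ℕ) : Finite (CornerCell n m rr ss) :=
  inferInstanceAs (Finite (Sigma _))

instance (n m : ℕ) (rr ss : Fin m → ℕ) : Finite (NRSCellM n m rr ss) :=
  inferInstanceAs (Finite (Fin n ⊕ _))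

def splitCorner (n m : ℕ) (rr ss : Fin m → ℕ) :
    NRSCell n m rr ss ≃ NRSCellM n m rr ss ⊕ CornerCell n m rr ss where
  toFun
    | .inl j => .inl (.inl j)
    | .inr ⟨i, p, hp⟩ =>
      if h : p.1 ≤ rr i ∧ n < p.2 then .inr ⟨i, p, hp.1, hp.2, h⟩
      else .inl (.inr ⟨i, p, hp.1, hp.2, h⟩)
  invFun
    | .inl (.inl j) => .inl j
    | .inl (.inr ⟨i, p, hp⟩) => .inr ⟨i, p, hp.1, hp.2.1⟩
    | .inr ⟨i, p, hp⟩ => .inr ⟨i, p, hp.1, hp.2.1⟩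
  left_inv := by
    rintro (j | ⟨i, p, hp⟩)
    · rfl
    · dsimp only
      split_ifs <;> rfl
  right_inv := by
    rintro ((j | ⟨i, p, hp⟩) | ⟨i, p, hp⟩)
    · rfl
    · simp [hp.2.2]
    · simp [hp.2.2]

theorem bookRel_iff_liftRel_splitCorner {n m : ℕ} {rr ss : Fin m → ℕ}
    (a b : NRSCell n m rr ss) :
    bookRel rr a b ↔ Sum.LiftRel (bookRel rr) (fun _ _ => False)
      (splitCorner n m rr ss a) (splitCorner n m rr ss b) := by
  rcases a with j | ⟨i, p, hp⟩ <;> rcases b with j' | ⟨i', p', hp'⟩ <;>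
    simp only [splitCorner, Equiv.coe_fn_mk] <;> try split_ifs
  -- `omega` sees that a corner cell shares neither its row nor its column with a diagonal cell.
  all_goals first
    | exact ⟨fun h => .inl h, by rintro ⟨h⟩; exact h⟩
    | exact iff_of_false (by simp only [bookRel, not_false_eq_true] <;> omega)
        (by rintro (_ | ⟨⟨⟩⟩))

def cornerCellEquiv (n r s : ℕ) :
    {p : ℕ × ℕ // stairCell n r s p ∧ ¬ isDiagCell n r p ∧ (p.1 ≤ r ∧ n < p.2)} ≃
      Fin r × Fin s where
  toFun p := (⟨p.1.1 - 1, by grind [stairCell]⟩, ⟨p.1.2 - n - 1, by grind [stairCell]⟩)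
  invFun x := ⟨(x.1 + 1, n + x.2 + 1), by grind [stairCell, isDiagCell]⟩
  left_inv p := by grind [stairCell]
  right_inv x := by grind

theorem card_cornerCell (n m : ℕ) (rr ss : Fin m → ℕ) :
    Nat.card (CornerCell n m rr ss) = ∑ i, rr i * ss i := by
  calc Nat.card (CornerCell n m rr ss) = Nat.card ((i : Fin m) × (Fin (rr i) × Fin (ss i))) :=
        Nat.card_congr (Equiv.sigmaCongrRight fun i => cornerCellEquiv n (rr i) (ss i))
    _ = ∑ i, rr i * ss i := by simp

theorem sbnrsMnum_eq_card_naturalLabeling (n m : ℕ) (rr ss : Fin m → ℕ) :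
    SBnrsMnum n m rr ss = Nat.card (NaturalLabeling
      (bookRel rr : NRSCellM n m rr ss → NRSCellM n m rr ss → Prop)
      (Set.Icc 1 (nrsNM n m rr ss))) :=
  Nat.card_congr <| (Equiv.subtypeEquivRight isSBnrsM_iff).trans (NaturalLabeling.equivBijOn _ _)

theorem sbnrsNum_eq_card_naturalLabeling (n m : ℕ) (rr ss : Fin m → ℕ) :
    SBnrsNum n m rr ss = Nat.card (NaturalLabeling
      (bookRel rr : NRSCell n m rr ss → NRSCell n m rr ss → Prop) (Set.Icc 1 (nrsN n m rr ss))) :=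
  Nat.card_congr <| (Equiv.subtypeEquivRight isSBnrs_iff).trans (NaturalLabeling.equivBijOn _ _)

theorem card_Icc_one_eq (N : ℕ) : Nat.card (Set.Icc 1 N) = N := by
  simp

theorem sbnrsNum_eq_mul_descFactorial (n m : ℕ) (rr ss : Fin m → ℕ) :
    SBnrsNum n m rr ss =
      SBnrsMnum n m rr ss * (nrsN n m rr ss).descFactorial (∑ i, rr i * ss i) := by
  have hcard : Nat.card (Set.Icc 1 (nrsNM n m rr ss)) + Nat.card (CornerCell n m rr ss) =
      Nat.card (Set.Icc 1 (nrsN n m rr ss)) := by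
    rw [card_cornerCell, card_Icc_one_eq, card_Icc_one_eq]
    rfl
  calc SBnrsNum n m rr ss
      = Nat.card (NaturalLabeling
          (Sum.LiftRel (bookRel rr : NRSCellM n m rr ss → NRSCellM n m rr ss → Prop)
            fun _ _ : CornerCell n m rr ss => False) (Set.Icc 1 (nrsN n m rr ss))) :=
        (sbnrsNum_eq_card_naturalLabeling n m rr ss).trans <| Nat.card_congr <|
          NaturalLabeling.congrLeft (splitCorner n m rr ss) bookRel_iff_liftRel_splitCorner
    _ = _ := by
      rw [card_naturalLabeling_sum _ hcard, sbnrsMnum_eq_card_naturalLabeling, card_cornerCell,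
        card_Icc_one_eq]

theorem selberg_books_eq_minus_mul_ratio_general (n m r s : ℕ)
    (rr ss : Fin m → ℕ) (hr : ∑ i, rr i = r) (hs : ∑ i, ss i = s) :
    (SBnrsNum n m rr ss : ℚ) =
      SBnrsMnum n m rr ss *
        (((r + s + 1) * n + m * (n * (n - 1) / 2) + ∑ i, rr i * ss i).factorial : ℚ) /
        (((r + s + 1) * n + m * (n * (n - 1) / 2)).factorial : ℚ) := by
  subst hr hs
  have hfac : (nrsNM n m rr ss).factorial * (nrsN n m rr ss).descFactorial (∑ i, rr i * ss i) =
      (nrsN n m rr ss).factorial := by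
    have h := Nat.factorial_mul_ascFactorial (nrsNM n m rr ss) (∑ i, rr i * ss i)
    rwa [← Nat.add_descFactorial_eq_ascFactorial] at h
  change (SBnrsNum n m rr ss : ℚ) =
    SBnrsMnum n m rr ss * (nrsN n m rr ss).factorial / (nrsNM n m rr ss).factorial
  rw [sbnrsNum_eq_mul_descFactorial, ← hfac]
  push_cast
  field_simp

theorem selberg_books_eq_minus_mul_ratio (n m r s : ℕ) (hn : 0 < n)
    (rr ss : Fin m → ℕ) (hr : ∑ i, rr i = r) (hs : ∑ i, ss i = s) :
    (SBnrsNum n m rr ss : ℚ) =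
      SBnrsMnum n m rr ss *
        (((r + s + 1) * n + m * (n * (n - 1) / 2) + ∑ i, rr i * ss i).factorial : ℚ) /
        (((r + s + 1) * n + m * (n * (n - 1) / 2)).factorial : ℚ) :=
  selberg_books_eq_minus_mul_ratio_general n m r s rr ss hr hs
end

section
/- For a positive integer n and nonnegative integers r, s, m, the integral over [0,∞)^{n+1} of ∏_{i=1}^n (t_0+t_1+⋯+t_{i−1})^r (t_i+t_{i+1}+⋯+t_n)^s · ∏_{1≤i<j≤n} (t_i+t_{i+1}+⋯+t_{j−1})^m · e^{−t_0−t_1−⋯−t_n} with respect to dt_0 dt_1 ⋯ dt_n equals (((r+s+1)n + m·n(n−1)/2)! / n!) times the integral over [0,1]^n of ∏_{i=1}^n x_i^r (1−x_i)^s · ∏_{1≤i<j≤n} |x_i − x_j|^m with respect to dx_1 ⋯ dx_n. -/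
/-!
Substitute for `t` the gaps between the points `0 < T x₀ < ⋯ < T x_{n-1} < T`, i.e.
`t_k = T (x_k - x_{k-1})` with `x_{-1} = 0` and `x_n = 1`. This maps `T > 0` times the ordered
simplex `0 < x₀ < ⋯ < x_{n-1} < 1` onto the open orthant with Jacobian `T ^ n`. The partial sums
of `t` become `T x_i` and `T`, so by homogeneity the integrand becomes `T ^ K e^{-T}` times the
Selberg integrand at `x`, where `K = (r + s + 1) n + m n (n - 1) / 2`. The `T`-integral is
`Γ(K + 1) = K!`, and since the Selberg integrand is symmetric, its integral over the ordered
simplex is `1 / n!` of its integral over the cube.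
-/

open MeasureTheory Finset

section Symmetrization

variable {n : ℕ}

lemma measurableSet_setOf_strictMono : MeasurableSet {x : Fin n → ℝ | StrictMono x} := by
  have : {x : Fin n → ℝ | StrictMono x} = ⋂ a, ⋂ b, ⋂ (_ : a < b), {x | x a < x b} := by
    ext x; simp [StrictMono]
  rw [this]
  exact .iInter fun a => .iInter fun b => .iInter fun _ =>
    measurableSet_lt (measurable_pi_apply a) (measurable_pi_apply b)

lemma volume_setOf_apply_eq_apply_s16 {i j : Fin n} (h : i ≠ j) :
    volume {x : Fin n → ℝ | x i = x j} = 0 := by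
  have : {x : Fin n → ℝ | x i = x j} =
      (LinearMap.ker (LinearMap.proj (R := ℝ) (φ := fun _ : Fin n => ℝ) i -
        LinearMap.proj j) : Set _) := by
    ext x; simp [sub_eq_zero]
  rw [this]
  refine Measure.addHaar_submodule _ _ fun htop => ?_
  have := congrArg (fun f => f (Pi.single i 1)) (LinearMap.ker_eq_top.mp htop)
  simp [h.symm] at this

lemma volume_setOf_not_injective : volume {x : Fin n → ℝ | ¬ Function.Injective x} = 0 := by
  have : {x : Fin n → ℝ | ¬ Function.Injective x} ⊆
      ⋃ i, ⋃ j, ⋃ (_ : i ≠ j), {x : Fin n → ℝ | x i = x j} := by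
    intro x hx
    simp only [Function.Injective, not_forall] at hx
    obtain ⟨i, j, hij, hne⟩ := hx
    simp only [Set.mem_iUnion]
    exact ⟨i, j, hne, hij⟩
  exact measure_mono_null this <| measure_iUnion_null fun i => measure_iUnion_null fun j =>
    measure_iUnion_null fun h => volume_setOf_apply_eq_apply_s16 h

lemma eq_sort_of_strictMono_comp {x : Fin n → ℝ} {σ : Equiv.Perm (Fin n)}
    (h : StrictMono (x ∘ σ)) : σ = Tuple.sort x :=
  Tuple.eq_sort_iff.2 ⟨h.monotone, fun _ _ hij heq => absurd heq (h hij).ne⟩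

/-- The `n!` sets where `x ∘ σ` is increasing are images of each other, are disjoint, and cover
`Iⁿ` up to the null set of tuples with a repeated coordinate. -/
theorem setIntegral_univ_pi_eq_factorial_mul {I : Set ℝ} (hI : MeasurableSet I)
    {F : (Fin n → ℝ) → ℝ} (hF : IntegrableOn F (Set.univ.pi fun _ => I))
    (hsymm : ∀ (σ : Equiv.Perm (Fin n)) x, F (x ∘ σ) = F x) :
    ∫ x in Set.univ.pi (fun _ => I), F x =
      n.factorial * ∫ x in Set.univ.pi (fun _ => I) ∩ {x | StrictMono x}, F x := by
  set P := Set.univ.pi fun _ : Fin n => I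
  let A (σ : Equiv.Perm (Fin n)) : Set (Fin n → ℝ) := P ∩ {x | StrictMono (x ∘ σ)}
  let e (σ : Equiv.Perm (Fin n)) := MeasurableEquiv.piCongrLeft (fun _ : Fin n => ℝ) σ.symm
  have he (σ : Equiv.Perm (Fin n)) (x : Fin n → ℝ) : e σ x = x ∘ σ := by
    funext i; simp [e, MeasurableEquiv.piCongrLeft, Equiv.piCongrLeft, Equiv.piCongrLeft']
  have hpre (σ : Equiv.Perm (Fin n)) : e σ ⁻¹' A 1 = A σ := by
    ext x
    simp only [A, P, Set.mem_preimage, he, Set.mem_inter_iff, Set.mem_pi, Set.mem_univ,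
      true_implies, Set.mem_ofPred_eq, Equiv.Perm.coe_one, Function.comp_id, Function.comp_apply]
    exact and_congr_left fun _ => σ.forall_congr_right (q := fun i => x i ∈ I)
  have hA (σ : Equiv.Perm (Fin n)) : ∫ x in A σ, F x = ∫ x in A 1, F x := by
    rw [← (volume_measurePreserving_piCongrLeft (fun _ : Fin n => ℝ) σ.symm)
      |>.setIntegral_preimage_emb (e σ).measurableEmbedding F (A 1), hpre]
    congr 1 with x
    exact ((congrArg F (he σ x)).trans (hsymm σ x)).symm
  have hcover : P =ᵐ[volume] ⋃ σ, A σ := by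
    refine (ae_eq_set).2 ⟨measure_mono_null (fun x hx => ?_) volume_setOf_not_injective, ?_⟩
    · intro hinj
      exact hx.2 (Set.mem_iUnion.2 ⟨Tuple.sort x, hx.1,
        (Tuple.monotone_sort x).strictMono_of_injective (hinj.comp (Equiv.injective _))⟩)
    · rw [Set.sdiff_eq_empty.2 (Set.iUnion_subset fun σ => Set.inter_subset_left)]
      exact measure_empty
  have hdisj : Pairwise (Function.onFun Disjoint A) := fun σ τ hne =>
    Set.disjoint_left.2 fun x hσ hτ =>
      hne ((eq_sort_of_strictMono_comp hσ.2).trans (eq_sort_of_strictMono_comp hτ.2).symm)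
  have hAmeas (σ : Equiv.Perm (Fin n)) : MeasurableSet (A σ) :=
    (MeasurableSet.univ_pi fun _ => hI).inter
      (measurableSet_setOf_strictMono.preimage (e σ).measurable |>.congr (by ext x; simp [he]))
  calc ∫ x in P, F x = ∑ σ : Equiv.Perm (Fin n), ∫ x in A σ, F x := by
        rw [setIntegral_congr_set hcover, integral_iUnion hAmeas hdisj
          (hF.mono_set (Set.iUnion_subset fun σ => Set.inter_subset_left)), tsum_fintype]
    _ = n.factorial * ∫ x in P ∩ {x | StrictMono x}, F x := by
        simp only [hA, sum_const, card_univ, Fintype.card_perm, Fintype.card_fin, nsmul_eq_mul, A,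
          Equiv.Perm.coe_one, Function.comp_id]

variable (n) in
def orderedSimplex : Set (Fin n → ℝ) :=
  Set.univ.pi (fun _ => Set.Ioo 0 1) ∩ {x | StrictMono x}

lemma measurableSet_orderedSimplex : MeasurableSet (orderedSimplex n) :=
  (MeasurableSet.univ_pi fun _ => measurableSet_Ioo).inter measurableSet_setOf_strictMono

theorem setIntegral_univ_pi_Icc_eq_factorial_mul {F : (Fin n → ℝ) → ℝ} (hF : Continuous F)
    (hsymm : ∀ (σ : Equiv.Perm (Fin n)) x, F (x ∘ σ) = F x) :
    ∫ x in Set.univ.pi (fun _ => Set.Icc (0 : ℝ) 1), F x =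
      n.factorial * ∫ x in orderedSimplex n, F x := by
  have hIoo : (Set.univ.pi fun _ : Fin n => Set.Ioo (0 : ℝ) 1) =ᵐ[volume]
      Set.univ.pi fun _ => Set.Icc 0 1 := Measure.pi_Ioo_ae_eq_pi_Icc
  rw [← setIntegral_congr_set hIoo]
  exact setIntegral_univ_pi_eq_factorial_mul measurableSet_Ioo
    ((hF.continuousOn.integrableOn_compact (isCompact_univ_pi fun _ => isCompact_Icc)).mono_set
      (Set.pi_mono fun _ _ => Set.Ioo_subset_Icc_self)) hsymm

end Symmetrization

section SelbergIntegrand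

variable {n : ℕ}

lemma prod_abs_sub_eq_abs_det_vandermonde (x : Fin n → ℝ) :
    ∏ p ∈ univ.filter (fun p : Fin n × Fin n => p.1 < p.2), |x p.1 - x p.2| =
      |(Matrix.vandermonde x).det| := by
  rw [Matrix.det_vandermonde, abs_prod, prod_filter, Fintype.prod_prod_type]
  refine prod_congr rfl fun i _ => ?_
  rw [abs_prod, ← prod_filter]
  exact prod_congr (by ext j; simp) fun j _ => abs_sub_comm _ _

lemma abs_det_vandermonde_comp_perm (x : Fin n → ℝ) (σ : Equiv.Perm (Fin n)) :
    |(Matrix.vandermonde (x ∘ σ)).det| = |(Matrix.vandermonde x).det| := by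
  rw [show Matrix.vandermonde (x ∘ σ) = (Matrix.vandermonde x).submatrix σ id from rfl,
    Matrix.det_permute, abs_mul]
  rcases Int.units_eq_one_or (Equiv.Perm.sign σ) with h | h <;> simp [h]

def selbergIntegrand (r s m : ℕ) (x : Fin n → ℝ) : ℝ :=
  (∏ i, x i ^ r * (1 - x i) ^ s) *
    ∏ p ∈ univ.filter (fun p : Fin n × Fin n => p.1 < p.2), |x p.1 - x p.2| ^ m

lemma selbergIntegrand_comp_perm (r s m : ℕ) (σ : Equiv.Perm (Fin n)) (x : Fin n → ℝ) :
    selbergIntegrand r s m (x ∘ σ) = selbergIntegrand r s m x := by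
  simp only [selbergIntegrand, prod_pow, prod_abs_sub_eq_abs_det_vandermonde,
    abs_det_vandermonde_comp_perm]
  exact congrArg (· * _) (Equiv.prod_comp σ fun i => x i ^ r * (1 - x i) ^ s)

lemma continuous_selbergIntegrand (r s m : ℕ) :
    Continuous (selbergIntegrand r s m : (Fin n → ℝ) → ℝ) := by
  unfold selbergIntegrand
  fun_prop

end SelbergIntegrand

section PartialSums

variable {n : ℕ} {M : Type*}

def partialSum [AddCommMonoid M] (t : Fin (n + 1) → M) (i : ℕ) : M :=
  ∑ l ∈ univ.filter (fun l : Fin (n + 1) => (l : ℕ) < i), t l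

lemma partialSum_zero [AddCommMonoid M] (t : Fin (n + 1) → M) : partialSum t 0 = 0 := by
  simp [partialSum]

lemma partialSum_succ [AddCommMonoid M] (t : Fin (n + 1) → M) (k : Fin (n + 1)) :
    partialSum t (k + 1) = partialSum t k + t k := by
  have : univ.filter (fun l : Fin (n + 1) => (l : ℕ) < k + 1) =
      insert k (univ.filter fun l : Fin (n + 1) => (l : ℕ) < k) := by
    ext l; simp only [mem_filter, mem_univ, true_and, mem_insert, Fin.ext_iff]; omega
  rw [partialSum, partialSum, this, sum_insert (by simp), add_comm]

lemma partialSum_eq_sum [AddCommMonoid M] (t : Fin (n + 1) → M) :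
    partialSum t (n + 1) = ∑ l, t l :=
  sum_congr (filter_true_of_mem fun l _ => l.isLt) fun _ _ => rfl

lemma sum_filter_le_eq_sub_partialSum [AddCommGroup M] (t : Fin (n + 1) → M) (i : ℕ) :
    ∑ l ∈ univ.filter (fun l : Fin (n + 1) => i ≤ (l : ℕ)), t l =
      ∑ l, t l - partialSum t i := by
  rw [partialSum, eq_sub_iff_add_eq, add_comm, ← sum_filter_add_sum_filter_not univ
    (fun l : Fin (n + 1) => (l : ℕ) < i)]
  simp only [not_lt]

lemma sum_filter_Ico_eq_sub_partialSum [AddCommGroup M] (t : Fin (n + 1) → M) {i j : ℕ}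
    (hij : i ≤ j) :
    ∑ l ∈ univ.filter (fun l : Fin (n + 1) => i ≤ (l : ℕ) ∧ (l : ℕ) < j), t l =
      partialSum t j - partialSum t i := by
  rw [partialSum, partialSum, eq_sub_iff_add_eq, ← sum_union]
  · congr 1; ext l; simp only [mem_union, mem_filter, mem_univ, true_and]; omega
  · exact disjoint_filter.2 fun l _ h1 h2 => by omega

end PartialSums

section GapCoordinates

variable {n : ℕ}

variable (n) in
/-- `z ↦ (z₀, z₁ - z₀, …, z_n - z_{n-1})`, where `Fin.cons 0 z` supplies `z_{-1} = 0`. -/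
def successiveDiff : (Fin (n + 1) → ℝ) →L[ℝ] (Fin (n + 1) → ℝ) :=
  ContinuousLinearMap.pi fun k =>
    ContinuousLinearMap.proj k - Fin.cons (α := fun _ => (Fin (n + 1) → ℝ) →L[ℝ] ℝ) 0
      ContinuousLinearMap.proj k.castSucc

lemma successiveDiff_apply (z : Fin (n + 1) → ℝ) (k : Fin (n + 1)) :
    successiveDiff n z k = z k - (Fin.cons 0 z : Fin (n + 2) → ℝ) k.castSucc := by
  simp only [successiveDiff, ContinuousLinearMap.pi_apply, sub_apply,
    ContinuousLinearMap.proj_apply]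
  congr 1
  cases k.castSucc using Fin.cases <;> simp

lemma partialSum_successiveDiff (z : Fin (n + 1) → ℝ) (k : Fin (n + 1)) :
    partialSum (successiveDiff n z) (k + 1) = z k := by
  induction k using Fin.induction with
  | zero => rw [partialSum_succ, Fin.val_zero, partialSum_zero, successiveDiff_apply]; simp
  | succ j ih =>
    rw [partialSum_succ, Fin.val_succ, ← Fin.val_castSucc, ih, successiveDiff_apply,
      ← Fin.succ_castSucc, Fin.cons_succ, add_sub_cancel]

lemma successiveDiff_partialSum (t : Fin (n + 1) → ℝ) :
    successiveDiff n (fun k => partialSum t (k + 1)) = t := by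
  funext k
  rw [successiveDiff_apply]
  cases k using Fin.cases with
  | zero => rw [partialSum_succ, Fin.val_zero, partialSum_zero]; simp
  | succ j =>
    rw [← Fin.succ_castSucc, Fin.cons_succ, partialSum_succ, Fin.val_succ, ← Fin.val_castSucc]
    ring

lemma successiveDiff_injective : Function.Injective (successiveDiff n) := fun a b h =>
  funext fun k => by rw [← partialSum_successiveDiff a, h, partialSum_successiveDiff]

lemma successiveDiff_mem_univ_pi_Ioi_iff (z : Fin (n + 1) → ℝ) :
    successiveDiff n z ∈ Set.univ.pi (fun _ => Set.Ioi 0) ↔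
      StrictMono (Fin.cons 0 z : Fin (n + 2) → ℝ) := by
  simp [Fin.strictMono_iff_lt_succ, successiveDiff_apply]

lemma successiveDiff_image_strictMono_cons :
    successiveDiff n '' {z | StrictMono (Fin.cons 0 z : Fin (n + 2) → ℝ)} =
      Set.univ.pi (fun _ => Set.Ioi 0) := by
  simp_rw [← successiveDiff_mem_univ_pi_Ioi_iff]
  exact Set.image_preimage_eq _ fun t => ⟨_, successiveDiff_partialSum t⟩

lemma det_successiveDiff : (successiveDiff n).det = 1 := by
  have hcons {i j : Fin (n + 1)} (hij : i ≤ j) :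
      (Fin.cons 0 (Pi.single j 1) : Fin (n + 2) → ℝ) i.castSucc = 0 := by
    cases i using Fin.cases with
    | zero => simp
    | succ i =>
      rw [← Fin.succ_castSucc, Fin.cons_succ, Pi.single_apply, if_neg]
      exact (lt_of_lt_of_le Fin.castSucc_lt_succ hij).ne
  rw [ContinuousLinearMap.det, ← LinearMap.det_toMatrix', Matrix.det_of_isLowerTriangular]
  · refine prod_eq_one fun i _ => ?_
    simp [LinearMap.toMatrix'_apply, successiveDiff_apply, hcons le_rfl]
  · intro i j (hij : i < j)
    simp [LinearMap.toMatrix'_apply, successiveDiff_apply, hcons hij.le, hij.ne]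

lemma mem_orderedSimplex_iff (x : Fin n → ℝ) :
    x ∈ orderedSimplex n ↔ StrictMono (Fin.cons 0 (Fin.snoc x 1) : Fin (n + 2) → ℝ) := by
  rw [Fin.strictMono_cons, ← Fin.insertNth_last', Fin.strictMono_insertNth_iff]
  have hlast (i : Fin n) : ¬ Fin.last n < i.succ := not_lt.2 (Fin.le_last _)
  simp [orderedSimplex, Fin.forall_fin_succ', Fin.castSucc_lt_last, Fin.le_castSucc_iff, hlast,
    forall_and]
  tauto

variable (n) in
def simplexCone : Set (Fin (n + 1) → ℝ) :=
  {y | 0 < y (Fin.last n) ∧ Fin.init y ∈ orderedSimplex n}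

variable (n) in
/-- Writing `y = (x₀, …, x_{n-1}, T)`, this is `(T x₀, …, T x_{n-1}, T)`. -/
def coneMap (y : Fin (n + 1) → ℝ) : Fin (n + 1) → ℝ :=
  Fin.snoc (fun i => y (Fin.last n) * y i.castSucc) (y (Fin.last n))

lemma cons_zero_coneMap (y : Fin (n + 1) → ℝ) :
    (Fin.cons 0 (coneMap n y) : Fin (n + 2) → ℝ) =
      y (Fin.last n) • Fin.cons 0 (Fin.snoc (Fin.init y) 1) := by
  funext k
  cases k using Fin.cases with
  | zero => simp
  | succ k => cases k using Fin.lastCases <;> simp [coneMap, Fin.init]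

lemma coneMap_image_simplexCone :
    coneMap n '' simplexCone n = {z | StrictMono (Fin.cons 0 z : Fin (n + 2) → ℝ)} := by
  ext z
  constructor
  · rintro ⟨y, ⟨hT, hx⟩, rfl⟩ a b hab
    have := mul_lt_mul_of_pos_left ((mem_orderedSimplex_iff _).1 hx hab) hT
    simpa [cons_zero_coneMap] using this
  · intro hz
    set T := z (Fin.last n)
    have hT : 0 < T := (Fin.strictMono_cons.1 hz).1 _
    set y : Fin (n + 1) → ℝ := Fin.snoc (fun i => T⁻¹ * z i.castSucc) T
    have hy : coneMap n y = z := by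
      funext k
      cases k using Fin.lastCases <;> simp [coneMap, y, T, hT.ne']
    refine ⟨y, ⟨by simpa [y] using hT, (mem_orderedSimplex_iff _).2 fun a b hab => ?_⟩, hy⟩
    have h := cons_zero_coneMap y
    rw [hy, show y (Fin.last n) = T by simp [y]] at h
    have := hz hab
    rw [h] at this
    exact lt_of_mul_lt_mul_left this hT.le

lemma coneMap_injOn : Set.InjOn (coneMap n) (simplexCone n) := by
  intro a ha b _ h
  have hlast : a (Fin.last n) = b (Fin.last n) := by simpa [coneMap] using congrFun h (Fin.last n)
  funext k
  cases k using Fin.lastCases with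
  | last => exact hlast
  | cast i =>
    have := congrFun h i.castSucc
    simp only [coneMap, Fin.snoc_castSucc, hlast] at this
    exact mul_left_cancel₀ (hlast ▸ ha.1.ne') this

variable (n) in
def coneMapDeriv (y : Fin (n + 1) → ℝ) :
    (Fin (n + 1) → ℝ) →L[ℝ] (Fin (n + 1) → ℝ) :=
  ContinuousLinearMap.pi <| Fin.snoc (α := fun _ => (Fin (n + 1) → ℝ) →L[ℝ] ℝ)
    (fun i => y (Fin.last n) • ContinuousLinearMap.proj i.castSucc +
      y i.castSucc • ContinuousLinearMap.proj (Fin.last n))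
    (ContinuousLinearMap.proj (Fin.last n))

lemma hasFDerivAt_coneMap (y : Fin (n + 1) → ℝ) :
    HasFDerivAt (coneMap n) (coneMapDeriv n y) y := by
  rw [hasFDerivAt_pi']
  intro k
  rw [coneMapDeriv, ContinuousLinearMap.proj_pi]
  cases k using Fin.lastCases with
  | last =>
    simp only [coneMap, Fin.snoc_last]
    exact hasFDerivAt_apply _ _
  | cast i =>
    simp only [coneMap, Fin.snoc_castSucc]
    exact (hasFDerivAt_apply _ _).mul (hasFDerivAt_apply _ _)

lemma det_coneMapDeriv (y : Fin (n + 1) → ℝ) : (coneMapDeriv n y).det = y (Fin.last n) ^ n := by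
  rw [ContinuousLinearMap.det, ← LinearMap.det_toMatrix', Matrix.det_of_isUpperTriangular]
  · simp [Fin.prod_univ_castSucc, LinearMap.toMatrix'_apply, coneMapDeriv,
      (Fin.castSucc_lt_last _).ne]
  · intro i j (hij : j < i)
    cases i using Fin.lastCases with
    | last => simp [LinearMap.toMatrix'_apply, coneMapDeriv, hij.ne]
    | cast i =>
      simp [LinearMap.toMatrix'_apply, coneMapDeriv, hij.ne,
        (hij.trans (Fin.castSucc_lt_last i)).ne]

variable (n) in
def gapMap (y : Fin (n + 1) → ℝ) : Fin (n + 1) → ℝ :=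
  successiveDiff n (coneMap n y)

lemma gapMap_image_simplexCone :
    gapMap n '' simplexCone n = Set.univ.pi fun _ => Set.Ioi 0 := by
  rw [show gapMap n = successiveDiff n ∘ coneMap n from rfl, Set.image_comp,
    coneMap_image_simplexCone, successiveDiff_image_strictMono_cons]

lemma measurableSet_simplexCone : MeasurableSet (simplexCone n) :=
  (measurableSet_lt measurable_const (measurable_pi_apply _)).inter <|
    measurableSet_orderedSimplex.preimage (measurable_pi_lambda _ fun _ => measurable_pi_apply _)

theorem setIntegral_univ_pi_Ioi_eq_setIntegral_simplexCone (f : (Fin (n + 1) → ℝ) → ℝ) :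
    ∫ t in Set.univ.pi (fun _ => Set.Ioi 0), f t =
      ∫ y in simplexCone n, y (Fin.last n) ^ n * f (gapMap n y) := by
  rw [← gapMap_image_simplexCone, integral_image_eq_integral_abs_det_fderiv_smul volume
    measurableSet_simplexCone (f := gapMap n)
    (fun y _ => ((successiveDiff n).hasFDerivAt.comp y (hasFDerivAt_coneMap y)).hasFDerivWithinAt)
    (successiveDiff_injective.comp_injOn coneMap_injOn)]
  refine setIntegral_congr_fun measurableSet_simplexCone fun y hy => ?_
  have hdet : (successiveDiff n ∘L coneMapDeriv n y).det = y (Fin.last n) ^ n := by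
    rw [← det_coneMapDeriv, ← one_mul (coneMapDeriv n y).det, ← det_successiveDiff]
    exact LinearMap.det_comp _ _
  rw [hdet, abs_of_pos (pow_pos hy.1 n), smul_eq_mul]

theorem setIntegral_simplexCone_mul (g : ℝ → ℝ) (G : (Fin n → ℝ) → ℝ) :
    ∫ y in simplexCone n, g (y (Fin.last n)) * G (Fin.init y) =
      (∫ T in Set.Ioi 0, g T) * ∫ x in orderedSimplex n, G x := by
  let e := MeasurableEquiv.piFinSuccAbove (fun _ : Fin (n + 1) => ℝ) (Fin.last n)
  have he (y : Fin (n + 1) → ℝ) : e y = (y (Fin.last n), Fin.init y) := by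
    ext j
    · rfl
    · simp [e, MeasurableEquiv.piFinSuccAbove, Fin.init]
  have hpre : simplexCone n = e ⁻¹' (Set.Ioi 0 ×ˢ orderedSimplex n) := by
    ext y; simp [simplexCone, he]
  calc ∫ y in simplexCone n, g (y (Fin.last n)) * G (Fin.init y)
      = ∫ y in e ⁻¹' (Set.Ioi 0 ×ˢ orderedSimplex n),
          (fun q : ℝ × (Fin n → ℝ) => g q.1 * G q.2) (e y) := by simp only [hpre, he]
    _ = ∫ q in Set.Ioi 0 ×ˢ orderedSimplex n, g q.1 * G q.2 :=
      (volume_preserving_piFinSuccAbove (fun _ : Fin (n + 1) => ℝ) (Fin.last n))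
        |>.setIntegral_preimage_emb e.measurableEmbedding (fun q => g q.1 * G q.2) _
    _ = _ := by rw [Measure.volume_eq_prod, setIntegral_prod_mul]

end GapCoordinates

lemma prod_Icc_one_eq_prod_fin {M : Type*} [CommMonoid M] (n : ℕ) (g : ℕ → M) :
    ∏ i ∈ Icc 1 n, g i = ∏ k : Fin n, g (k + 1) := by
  rw [← Ico_add_one_right_eq_Icc, prod_Ico_eq_prod_range, ← Fin.prod_univ_eq_prod_range]
  simp [add_comm]

lemma prod_Icc_pairs_eq_prod_fin_pairs {M : Type*} [CommMonoid M] (n : ℕ) (g : ℕ × ℕ → M) :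
    ∏ p ∈ (Icc 1 n ×ˢ Icc 1 n).filter (fun p => p.1 < p.2), g p =
      ∏ q ∈ univ.filter (fun q : Fin n × Fin n => q.1 < q.2), g (q.1 + 1, q.2 + 1) := by
  rw [prod_filter, prod_product, prod_Icc_one_eq_prod_fin]
  simp_rw [prod_Icc_one_eq_prod_fin]
  rw [prod_filter, Fintype.prod_prod_type]
  simp only [Nat.add_lt_add_iff_right, Fin.val_fin_lt]

noncomputable def selbergGapIntegrand (n r s m : ℕ) (t : Fin (n + 1) → ℝ) : ℝ :=
  ((∏ i ∈ Icc 1 n,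
      (∑ l ∈ univ.filter (fun l : Fin (n + 1) => l.val < i), t l) ^ r *
      (∑ l ∈ univ.filter (fun l : Fin (n + 1) => i ≤ l.val), t l) ^ s) *
    ∏ p ∈ (Icc 1 n ×ˢ Icc 1 n).filter (fun p => p.1 < p.2),
      (∑ l ∈ univ.filter (fun l : Fin (n + 1) => p.1 ≤ l.val ∧ l.val < p.2), t l) ^ m) *
    Real.exp (-(∑ l, t l))

section Integrands

variable {n : ℕ}

lemma selbergGapIntegrand_successiveDiff (r s m : ℕ) (z : Fin (n + 1) → ℝ) :
    selbergGapIntegrand n r s m (successiveDiff n z) =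
      (∏ k : Fin n, z k.castSucc ^ r * (z (Fin.last n) - z k.castSucc) ^ s) *
        (∏ q ∈ univ.filter (fun q : Fin n × Fin n => q.1 < q.2),
          (z q.2.castSucc - z q.1.castSucc) ^ m) * Real.exp (-z (Fin.last n)) := by
  have hsum : ∑ l, successiveDiff n z l = z (Fin.last n) := by
    rw [← partialSum_eq_sum]
    exact partialSum_successiveDiff z (Fin.last n)
  have hps (k : Fin n) : partialSum (successiveDiff n z) (k + 1) = z k.castSucc :=
    partialSum_successiveDiff z k.castSucc
  rw [selbergGapIntegrand, prod_Icc_one_eq_prod_fin, prod_Icc_pairs_eq_prod_fin_pairs, hsum]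
  congr 2
  · refine prod_congr rfl fun k _ => ?_
    rw [sum_filter_le_eq_sub_partialSum, hsum, ← hps k]
    rfl
  · refine prod_congr rfl fun q hq => ?_
    have hq : (q.1 : ℕ) + 1 ≤ q.2 + 1 := by simp at hq; omega
    rw [sum_filter_Ico_eq_sub_partialSum _ hq, hps, hps]

lemma pow_mul_selbergGapIntegrand_successiveDiff_snoc (r s m : ℕ) (T : ℝ) {x : Fin n → ℝ}
    (hx : StrictMono x) :
    T ^ n * selbergGapIntegrand n r s m (successiveDiff n (Fin.snoc (fun i => T * x i) T)) =
      T ^ ((r + s + 1) * n + m * (n * (n - 1) / 2)) * Real.exp (-T) * selbergIntegrand r s m x := by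
  have hsingle (k : Fin n) :
      (T * x k) ^ r * (T - T * x k) ^ s = T ^ (r + s) * (x k ^ r * (1 - x k) ^ s) := by
    rw [show T - T * x k = T * (1 - x k) by ring, mul_pow, mul_pow, pow_add]
    ring
  have hpair : ∀ q ∈ univ.filter (fun q : Fin n × Fin n => q.1 < q.2),
      (T * x q.2 - T * x q.1) ^ m = T ^ m * |x q.1 - x q.2| ^ m := by
    intro q hq
    rw [abs_sub_comm, abs_of_pos (sub_pos.2 (hx (mem_filter.1 hq).2)), ← mul_pow, mul_sub]
  rw [selbergGapIntegrand_successiveDiff]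
  simp only [Fin.snoc_castSucc, Fin.snoc_last]
  rw [prod_congr rfl fun k _ => hsingle k, prod_congr rfl hpair, selbergIntegrand]
  simp only [prod_mul_distrib, prod_const, card_univ, Fintype.card_fin,
    Fintype.card_product_filter_lt, Nat.choose_two_right]
  ring

end Integrands

lemma integral_pow_mul_exp_neg_eq_factorial (K : ℕ) :
    ∫ T in Set.Ioi (0 : ℝ), T ^ K * Real.exp (-T) = K.factorial := by
  rw [← Real.Gamma_nat_eq_factorial, Real.Gamma_eq_integral (by positivity)]
  refine setIntegral_congr_fun measurableSet_Ioi fun T _ => ?_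
  rw [add_sub_cancel_right, Real.rpow_natCast, mul_comm]

theorem selberg_integral_alternative_expression_general (n r s m : ℕ) :
    (∫ t in Set.univ.pi (fun _ : Fin (n + 1) => Set.Ici (0 : ℝ)),
      ((∏ i ∈ Finset.Icc 1 n,
          (∑ l ∈ Finset.univ.filter (fun l : Fin (n + 1) => l.val < i), t l) ^ r *
          (∑ l ∈ Finset.univ.filter (fun l : Fin (n + 1) => i ≤ l.val), t l) ^ s) *
        ∏ p ∈ (Finset.Icc 1 n ×ˢ Finset.Icc 1 n).filter (fun p => p.1 < p.2),
          (∑ l ∈ Finset.univ.filter (fun l : Fin (n + 1) => p.1 ≤ l.val ∧ l.val < p.2),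
            t l) ^ m) *
        Real.exp (-(∑ l, t l)))
    = ((((r + s + 1) * n + m * (n * (n - 1) / 2)).factorial : ℝ) / (n.factorial : ℝ)) *
      ∫ x in Set.univ.pi (fun _ : Fin n => Set.Icc (0 : ℝ) 1),
        (∏ i, x i ^ r * (1 - x i) ^ s) *
          ∏ p ∈ Finset.univ.filter (fun p : Fin n × Fin n => p.1 < p.2),
            |x p.1 - x p.2| ^ m := by
  set K := (r + s + 1) * n + m * (n * (n - 1) / 2)
  calc _ = ∫ t in Set.univ.pi (fun _ => Set.Ioi 0), selbergGapIntegrand n r s m t :=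
        (setIntegral_congr_set Measure.pi_Ioi_ae_eq_pi_Ici).symm
    _ = ∫ y in simplexCone n, y (Fin.last n) ^ K * Real.exp (-y (Fin.last n)) *
          selbergIntegrand r s m (Fin.init y) := by
        rw [setIntegral_univ_pi_Ioi_eq_setIntegral_simplexCone]
        exact setIntegral_congr_fun measurableSet_simplexCone fun y hy =>
          pow_mul_selbergGapIntegrand_successiveDiff_snoc r s m _ hy.2.2
    _ = K.factorial * ∫ x in orderedSimplex n, selbergIntegrand r s m x := by
        rw [setIntegral_simplexCone_mul (fun T => T ^ K * Real.exp (-T)),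
          integral_pow_mul_exp_neg_eq_factorial]
    _ = K.factorial / n.factorial *
          ∫ x in Set.univ.pi (fun _ : Fin n => Set.Icc (0 : ℝ) 1),
            selbergIntegrand r s m x := by
        rw [setIntegral_univ_pi_Icc_eq_factorial_mul (continuous_selbergIntegrand r s m)
          (selbergIntegrand_comp_perm r s m)]
        field_simp

theorem selberg_integral_alternative_expression (n r s m : ℕ) (hn : 0 < n) :
    (∫ t in Set.univ.pi (fun _ : Fin (n + 1) => Set.Ici (0 : ℝ)),
      ((∏ i ∈ Finset.Icc 1 n,
          (∑ l ∈ Finset.univ.filter (fun l : Fin (n + 1) => l.val < i), t l) ^ r *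
          (∑ l ∈ Finset.univ.filter (fun l : Fin (n + 1) => i ≤ l.val), t l) ^ s) *
        ∏ p ∈ (Finset.Icc 1 n ×ˢ Finset.Icc 1 n).filter (fun p => p.1 < p.2),
          (∑ l ∈ Finset.univ.filter (fun l : Fin (n + 1) => p.1 ≤ l.val ∧ l.val < p.2),
            t l) ^ m) *
        Real.exp (-(∑ l, t l)))
    = ((((r + s + 1) * n + m * (n * (n - 1) / 2)).factorial : ℝ) / (n.factorial : ℝ)) *
      ∫ x in Set.univ.pi (fun _ : Fin n => Set.Icc (0 : ℝ) 1),
        (∏ i, x i ^ r * (1 - x i) ^ s) *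
          ∏ p ∈ Finset.univ.filter (fun p : Fin n × Fin n => p.1 < p.2),
            |x p.1 - x p.2| ^ m :=
  selberg_integral_alternative_expression_general n r s m
end
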